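/- arXiv:2202.12621 — 10 statements merged into one kernel-verified Lean document; each statement's English description precedes it below -/
import Mathlib

section
/- Let K be a field, G a finite group, S a nonempty subset of G, and f a nonzero element of the group algebra KG with support S. If there exists a sequence g_1,...,g_t in G such that for every i in {2,...,t}, the set S·g_i is not contained in the union of the sets S·g_j for j < i, then the K-dimension of the right ideal f·KG is at least t. -/
/-!
The elements `f * g i` of `f·KG` are linearly independent. A point `s * g i` with `s ∈ S` lying
outside every `S * g j` with `j < i` is a coordinate at which `f * g i` is nonzero while every
earlier `f * g j` vanishes, so the family is triangular.
-/

open MonoidAlgebra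

attribute [local instance] Classical.propDecidable

/-- Coefficientwise (Schur) product on the group algebra. -/
noncomputable def schur {K G : Type*} [Semiring K] (f g : MonoidAlgebra K G) :
    MonoidAlgebra K G :=
  MonoidAlgebra.ofCoeff (Finsupp.zipWith (· * ·) (mul_zero 0) f.coeff g.coeff)

/-- `C` is a right ideal of the group algebra. -/
def IsRightIdeal {K G : Type*} [Field K] [Group G]
    (C : Submodule K (MonoidAlgebra K G)) : Prop :=
  ∀ c ∈ C, ∀ v : MonoidAlgebra K G, c * v ∈ C

theorem LinearIndependent.of_triangular {R M ι : Type*} [Ring R] [NoZeroDivisors R]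
    [AddCommGroup M] [Module R M] [Fintype ι] [LinearOrder ι]
    (v : ι → M) (φ : ι → M →ₗ[R] R) (hdiag : ∀ i, φ i (v i) ≠ 0)
    (hlower : ∀ i j, j < i → φ i (v j) = 0) : LinearIndependent R v := by
  rw [Fintype.linearIndependent_iff]
  intro c hc i
  induction i using WellFoundedGT.induction with
  | _ i ih =>
    have hφ : ∑ j, c j * φ i (v j) = 0 := by
      simpa [map_sum] using congrArg (φ i) hc
    rw [Finset.sum_eq_single i] at hφ
    · exact (mul_eq_zero.mp hφ).resolve_right (hdiag i)
    · intro j _ hji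
      rcases hji.lt_or_gt with hlt | hgt
      · rw [hlower i j hlt, mul_zero]
      · rw [ih j hgt, zero_mul]
    · simp

theorem exists_mem_forall_mul_inv_notMem {G : Type*} [Group G] {S : Finset G} (hS : S.Nonempty)
    {t : ℕ} (g : Fin t → G)
    (hseq : ∀ i : Fin t, 0 < (i : ℕ) →
      ¬ ((fun s => s * g i) '' (S : Set G) ⊆
          ⋃ j ∈ Set.Iio i, (fun s => s * g j) '' (S : Set G)))
    (i : Fin t) : ∃ s ∈ S, ∀ j < i, s * g i * (g j)⁻¹ ∉ S := by
  rcases Nat.eq_zero_or_pos (i : ℕ) with hi | hi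
  · obtain ⟨s, hs⟩ := hS
    exact ⟨s, hs, fun j hj => absurd hj (by simp [Fin.lt_def, hi])⟩
  · obtain ⟨_, ⟨s, hs, rfl⟩, hnew⟩ := Set.not_subset.mp (hseq i hi)
    refine ⟨s, hs, fun j hj hmem => hnew ?_⟩
    simp only [Set.mem_iUnion, Set.mem_image]
    exact ⟨j, hj, s * g i * (g j)⁻¹, hmem, by group⟩

theorem linearIndependent_mul_single {K G : Type*} [Field K] [Group G] {ι : Type*} [Fintype ι]
    [LinearOrder ι] (f : MonoidAlgebra K G) (g : ι → G)
    (hnew : ∀ i, ∃ s ∈ f.coeff.support, ∀ j < i, s * g i * (g j)⁻¹ ∉ f.coeff.support) :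
    LinearIndependent K fun i => f * single (g i) (1 : K) := by
  choose s hs hsnew using hnew
  refine LinearIndependent.of_triangular _
    (fun i => Finsupp.lapply (s i * g i) ∘ₗ (coeffLinearEquiv K).toLinearMap) (fun i => ?_)
    (fun i j hji => ?_)
  · simpa using hs i
  · simpa using hsnew i j hji

/-- If a sequence `g 0, ..., g (t-1)` has right `S`-rank `t` where `S = supp f`,
then `dim (f·KG) ≥ t`. -/
theorem stmt0 {K G : Type*} [Field K] [Group G] [Fintype G]
    (f : MonoidAlgebra K G) (hf : f ≠ 0) (S : Finset G) (hS : f.coeff.support = S)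
    (t : ℕ) (g : Fin t → G)
    (hseq : ∀ i : Fin t, 0 < (i : ℕ) →
      ¬ ((fun s => s * g i) '' (S : Set G) ⊆
          ⋃ j ∈ Set.Iio i, (fun s => s * g j) '' (S : Set G))) :
    t ≤ Module.finrank K ↥(LinearMap.range (LinearMap.mulLeft K f)) := by
  subst hS
  have hsupp : f.coeff.support.Nonempty := by simpa using hf
  have hli := linearIndependent_mul_single f g
    (exists_mem_forall_mul_inv_notMem hsupp g hseq)
  calc t = Module.finrank K (Submodule.span K (Set.range fun i => f * single (g i) (1 : K))) := by
        rw [finrank_span_eq_card hli, Fintype.card_fin]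
    _ ≤ _ := Submodule.finrank_mono <| Submodule.span_le.mpr <| by
        rintro _ ⟨i, rfl⟩
        exact ⟨single (g i) 1, rfl⟩
end

section
/- Let K be a field, G a finite group, and f \in KG with f \neq 0. Let T_f : KG \to KG be the K-linear map v \mapsto f v. Then |supp(f)| \cdot rank_K(T_f) \geq |G|. -/
open MonoidAlgebra

attribute [local instance] Classical.propDecidable

/-- Uncertainty principle: `|supp f| · rank T_f ≥ |G|` for nonzero `f`. -/
theorem stmt1 {K G : Type*} [Field K] [Group G] [Fintype G]
    (f : MonoidAlgebra K G) (hf : f ≠ 0) :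
    Fintype.card G ≤
      f.coeff.support.card * Module.finrank K ↥(LinearMap.range (LinearMap.mulLeft K f)) := by
  classical
  set col : G → MonoidAlgebra K G := fun y => f * single y 1 with hcol
  -- the singles span everything
  have htop : Submodule.span K (Set.range fun y : G => (single y 1 : MonoidAlgebra K G)) = ⊤ :=
    by rw [← Set.image_univ, ← MonoidAlgebra.supported_eq_span_single]
       exact eq_top_iff.2 fun x _ => (MonoidAlgebra.mem_supported ..).2 (Set.subset_univ _)
  -- the range of mulLeft f is the span of the columns
  have hrange : LinearMap.range (LinearMap.mulLeft K f) = Submodule.span K (Set.range col) := by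
    rw [LinearMap.range_eq_map, ← htop, Submodule.map_span, ← Set.range_comp]
    rfl
  obtain ⟨b, hb_sub, hb_span, hb_li⟩ := exists_linearIndependent K (Set.range col)
  have hb_fin : b.Finite := (Set.finite_range col).subset hb_sub
  haveI : Fintype b := hb_fin.fintype
  -- finrank is the number of chosen columns
  have hfr : Module.finrank K ↥(LinearMap.range (LinearMap.mulLeft K f)) = b.toFinset.card := by
    rw [hrange, ← hb_span, finrank_span_set_eq_card hb_li]
  set bs : Finset (MonoidAlgebra K G) := b.toFinset with hbs
  set S : Finset G := bs.biUnion fun v => v.coeff.support with hS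
  -- each column has support of size |supp f|
  have hcolsupp : ∀ y : G, (col y).coeff.support = f.coeff.support.image (· * y) := by
    intro y
    ext a
    simp only [Finset.mem_image, Finsupp.mem_support_iff, hcol]
    constructor
    · intro h
      refine ⟨a * y⁻¹, ?_, by group⟩
      intro h0
      apply h
      rw [coeff_mul_single_apply, h0, zero_mul]
    · rintro ⟨c, hc, rfl⟩
      rw [coeff_mul_single_apply]
      simpa using hc
  have hcard : ∀ v ∈ bs, (v : MonoidAlgebra K G).coeff.support.card = f.coeff.support.card := by
    intro v hv
    obtain ⟨y, rfl⟩ := hb_sub (by simpa [hbs] using hv)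
    rw [hcolsupp y, Finset.card_image_of_injective _ (mul_left_injective y)]
  -- every element of the span of b has support contained in S
  have hsub : Submodule.span K b ≤ MonoidAlgebra.supported K K (↑S : Set G) := by
    apply Submodule.span_le.2
    intro v hv
    rw [SetLike.mem_coe, MonoidAlgebra.mem_supported]
    intro a ha
    rw [hS, Finset.coe_biUnion]
    exact Set.mem_biUnion (by simpa [hbs] using hv) ha
  -- S covers G
  obtain ⟨s, hs⟩ := Finsupp.support_nonempty_iff.2 (mt MonoidAlgebra.coeff_eq_zero.1 hf)
  have hcover : ∀ x : G, x ∈ S := by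
    intro x
    have hmem : col (s⁻¹ * x) ∈ Submodule.span K b := by
      rw [hb_span]; exact Submodule.subset_span ⟨s⁻¹ * x, rfl⟩
    have hsupp : (↑(col (s⁻¹ * x)).coeff.support : Set G) ⊆ ↑S := hsub hmem
    apply hsupp
    rw [Finset.mem_coe, Finsupp.mem_support_iff, hcol, coeff_mul_single_apply, mul_one]
    have : x * (s⁻¹ * x)⁻¹ = s := by group
    rw [this]
    exact Finsupp.mem_support_iff.1 hs
  have h1 : Fintype.card G ≤ S.card := by
    rw [← Finset.card_univ]
    exact Finset.card_le_card fun x _ => hcover x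
  have h2 : S.card ≤ bs.card * f.coeff.support.card := by
    refine (Finset.card_biUnion_le).trans ?_
    calc ∑ v ∈ bs, v.coeff.support.card = ∑ _v ∈ bs, f.coeff.support.card :=
          Finset.sum_congr rfl hcard
      _ = bs.card * f.coeff.support.card := by rw [Finset.sum_const, smul_eq_mul]
      _ ≤ bs.card * f.coeff.support.card := le_rfl
  rw [hfr]
  calc Fintype.card G ≤ bs.card * f.coeff.support.card := h1.trans h2
    _ = f.coeff.support.card * bs.card := mul_comm _ _
end

section
/- Let K be a field, G a finite group, and C a nonzero right ideal of the group algebra KG. Then d(C) \cdot dim_K(C) \geq |G|, where d(C) is the minimum Hamming weight of a nonzero element of C. -/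
open MonoidAlgebra

attribute [local instance] Classical.propDecidable

/-!
Any nonzero codeword `c` has nonzero right translates `c * g`, all lying in `C`. An information
set `E` of `C` (at most `dim C` coordinates on which only `0 ∈ C` vanishes) must therefore meet
the support `supp(c) * g` of each of them, so `G = supp(c)⁻¹ * E` and
`|G| ≤ wt(c) · |E| ≤ wt(c) · dim C`; take `c` of minimal weight.
-/

open Module Pointwise

theorem Module.Dual.exists_finset_card_le_finrank_of_separating {K V ι : Type*} [Field K]
    [AddCommGroup V] [Module K V] [FiniteDimensional K V] (φ : ι → Dual K V)
    (hφ : ∀ v ≠ 0, ∃ i, φ i v ≠ 0) :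
    ∃ E : Finset ι, E.card ≤ finrank K V ∧ ∀ v, (∀ i ∈ E, φ i v = 0) → v = 0 := by
  have hspan : Submodule.span K (Set.range φ) = ⊤ :=
    Submodule.span_eq_top_of_ne_zero fun v hv => by
      obtain ⟨i, hi⟩ := hφ v hv
      exact ⟨φ i, ⟨i, rfl⟩, hi⟩
  obtain ⟨κ, a, -, hspan_a, hli⟩ := exists_linearIndependent' K φ
  have : Fintype κ := @Fintype.ofFinite κ hli.finite
  refine ⟨Finset.univ.image a, ?_, fun v hv => ?_⟩
  · calc (Finset.univ.image a).card ≤ Fintype.card κ := Finset.card_image_le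
      _ ≤ finrank K (Dual K V) := hli.fintype_card_le_finrank
      _ = finrank K V := Subspace.dual_finrank_eq
  · have hle : Submodule.span K (Set.range (φ ∘ a)) ≤ LinearMap.ker (Dual.eval K V v) :=
      Submodule.span_le.mpr <| by
        rintro _ ⟨k, rfl⟩
        exact hv _ (Finset.mem_image_of_mem a (Finset.mem_univ k))
    refine (forall_dual_apply_eq_zero_iff K v).mp fun ψ => hle ?_
    rw [hspan_a, hspan]
    trivial

theorem Finset.card_le_card_mul_card_of_forall_exists_mul_mem {G : Type*} [Group G] [Fintype G]
    {S E : Finset G} (h : ∀ g, ∃ s ∈ S, s * g ∈ E) :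
    Fintype.card G ≤ S.card * E.card := by
  have hcover : (Finset.univ : Finset G) ⊆ S⁻¹ * E := fun g _ => by
    obtain ⟨s, hs, hsg⟩ := h g
    exact Finset.mem_mul.mpr ⟨s⁻¹, Finset.inv_mem_inv hs, s * g, hsg, by group⟩
  calc Fintype.card G = (Finset.univ : Finset G).card := Finset.card_univ.symm
    _ ≤ (S⁻¹ * E).card := Finset.card_le_card hcover
    _ ≤ S⁻¹.card * E.card := Finset.card_mul_le
    _ = S.card * E.card := by rw [Finset.card_inv]

namespace MonoidAlgebra

variable {K G : Type*} [Field K]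

noncomputable def coeffDual (C : Submodule K (MonoidAlgebra K G)) (g : G) : Dual K C :=
  Finsupp.lapply g ∘ₗ (coeffLinearEquiv K).toLinearMap ∘ₗ C.subtype

theorem exists_coeffDual_ne_zero {C : Submodule K (MonoidAlgebra K G)} {z : C} (hz : z ≠ 0) :
    ∃ g, coeffDual C g z ≠ 0 := by
  have hz' : (z : MonoidAlgebra K G).coeff ≠ 0 :=
    mt coeff_eq_zero.mp fun h => hz (Subtype.ext h)
  obtain ⟨g, hg⟩ := Finsupp.support_nonempty_iff.mpr hz'
  exact ⟨g, Finsupp.mem_support_iff.mp hg⟩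

theorem mul_single_one_ne_zero [Group G] {c : MonoidAlgebra K G} (hc : c ≠ 0) (g : G) :
    c * single g 1 ≠ 0 := fun h => hc <| by
  simpa [mul_assoc, single_mul_single, ← one_def] using congrArg (· * single g⁻¹ (1 : K)) h

theorem card_le_card_support_mul_finrank [Group G] [Fintype G]
    {C : Submodule K (MonoidAlgebra K G)} (hI : IsRightIdeal C) {c : MonoidAlgebra K G} (hcC : c ∈ C) (hc0 : c ≠ 0) :
    Fintype.card G ≤ c.coeff.support.card * finrank K C := by
  obtain ⟨E, hEcard, hE⟩ := Dual.exists_finset_card_le_finrank_of_separating (coeffDual C)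
    fun _ => exists_coeffDual_ne_zero
  have hmeets : ∀ g, ∃ s ∈ c.coeff.support, s * g ∈ E := by
    intro g
    obtain ⟨e, heE, he⟩ : ∃ e ∈ E, coeffDual C e ⟨_, hI c hcC (single g 1)⟩ ≠ 0 := by
      by_contra! h
      exact mul_single_one_ne_zero hc0 g (congrArg Subtype.val (hE _ h))
    have he' : e ∈ (c * single g 1).coeff.support := Finsupp.mem_support_iff.mpr he
    rw [support_coeff_mul_single c 1 (fun _ => by simp) g, Finset.mem_map] at he'
    obtain ⟨s, hs, rfl⟩ := he'
    exact ⟨s, hs, heE⟩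
  exact (Finset.card_le_card_mul_card_of_forall_exists_mul_mem hmeets).trans
    (Nat.mul_le_mul_left _ hEcard)

end MonoidAlgebra

theorem stmt2_general {K G : Type*} [Field K] [Group G] [Fintype G]
    (C : Submodule K (MonoidAlgebra K G)) (hI : IsRightIdeal C)
    (d : ℕ) (hd : IsLeast {w | ∃ c ∈ C, c ≠ 0 ∧ c.coeff.support.card = w} d) :
    Fintype.card G ≤ d * Module.finrank K ↥C := by
  obtain ⟨c, hcC, hc0, rfl⟩ := hd.1
  exact MonoidAlgebra.card_le_card_support_mul_finrank hI hcC hc0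

/-- For a nonzero right ideal `C` of `KG`, `d(C) · dim C ≥ |G|`. -/
theorem stmt2 {K G : Type*} [Field K] [Group G] [Fintype G]
    (C : Submodule K (MonoidAlgebra K G)) (hI : IsRightIdeal C) (hC : C ≠ ⊥)
    (d : ℕ) (hd : IsLeast {w | ∃ c ∈ C, c ≠ 0 ∧ c.coeff.support.card = w} d) :
    Fintype.card G ≤ d * Module.finrank K ↥C :=
  stmt2_general C hI d hd
end

section
/- Let K be a field, G a finite group, and C a nonzero right ideal of KG satisfying d(C) \cdot dim_K(C) = |G|. Then there exists a subgroup H of G and an element c \in KH (viewed inside KG) such that |H| = d(C), the right ideal c·KH of KH has K-dimension 1, and C = c·KG. -/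
/-!
Choose `U ⊆ G` with `|U| ≤ k = dim C` such that codewords of `C` are determined by their
coordinates in `U`. As `C` is a right ideal, no nonzero codeword `x` vanishes on a right
translate `Ug`, so `(u, p) ↦ u⁻¹p` maps `U × supp x` onto `G`; when `|U| |supp x| ≤ |G|`
(e.g. `|supp x| = d`) this map is a bijection. Hence such a codeword with `x 1 ≠ 0` meets a
translate `Uv⁻¹` (`v ∈ U`) only at `1`, and two such codewords are proportional: the
combination killing the coefficient at `1` vanishes on `Uv⁻¹`. Applied to a minimum-weight
`c` with `c 1 ≠ 0` and its translates `c · h⁻¹`, this shows that `supp c` is the subgroup `H`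
of those `g` with `c · g ∈ K c`. Then `c · KH = K c`, and the translates of `c` by
representatives of the `[G : H] = k` right cosets have disjoint supports, so `c · KG` is a
`k`-dimensional subspace of `C`.
-/

open MonoidAlgebra

attribute [local instance] Classical.propDecidable

theorem Submodule.exists_finset_card_le_finrank_forall_eq_zero {K M ι : Type*} [Field K]
    [AddCommGroup M] [Module K M] [FiniteDimensional K M] (φ : ι → M →ₗ[K] K)
    (D : Submodule K M) (hφ : ∀ x ∈ D, (∀ i, φ i x = 0) → x = 0) :
    ∃ U : Finset ι, U.card ≤ Module.finrank K D ∧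
      ∀ x ∈ D, (∀ i ∈ U, φ i x = 0) → x = 0 := by
  induction hD : Module.finrank K D using Nat.strong_induction_on generalizing D with
  | _ n ih =>
  by_cases hbot : D = ⊥
  · exact ⟨∅, by simp, fun x hx _ => by simpa [hbot] using hx⟩
  obtain ⟨x₀, hx₀D, hx₀⟩ := (Submodule.ne_bot_iff D).mp hbot
  obtain ⟨i, hi⟩ : ∃ i, φ i x₀ ≠ 0 := by
    by_contra! h
    exact hx₀ (hφ x₀ hx₀D h)
  have hlt : Module.finrank K ↥(D ⊓ LinearMap.ker (φ i)) < n :=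
    hD ▸ Submodule.finrank_lt_finrank_of_lt (inf_lt_left.mpr fun h => hi (h hx₀D))
  obtain ⟨U, hU, hUD⟩ := ih _ hlt (D ⊓ LinearMap.ker (φ i)) (fun x hx => hφ x hx.1) rfl
  refine ⟨insert i U, (Finset.card_insert_le _ _).trans (by omega), fun x hx hxU => ?_⟩
  exact hUD x ⟨hx, hxU i (Finset.mem_insert_self _ _)⟩
    fun j hj => hxU j (Finset.mem_insert_of_mem hj)

namespace MonoidAlgebra

section Semiring

variable {R G : Type*} [Semiring R] [Group G]

theorem isUnit_single_one (g : G) : IsUnit (single g (1 : R)) := by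
  simpa only [of_apply] using (Group.isUnit g).map (of R G)

theorem card_support_mul_single_one (f : MonoidAlgebra R G) (g : G) :
    (f * single g 1).coeff.support.card = f.coeff.support.card := by
  rw [support_coeff_mul_single f 1 (by simp) g, Finset.card_map]

end Semiring

variable {K G : Type*} [Field K]

theorem linearIndependent_of_coeff_eq_zero {ι : Type*} (f : ι → MonoidAlgebra K G) (p : ι → G)
    (hdiag : ∀ i, (f i).coeff (p i) ≠ 0) (hoff : ∀ i j, i ≠ j → (f i).coeff (p j) = 0) :
    LinearIndependent K f := by
  rw [linearIndependent_iff']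
  intro s a hsum i hi
  have hcoeff := congr(($hsum).coeff (p i))
  simp only [coeff_sum, Finsupp.finsetSum_apply, coeff_smul_apply, smul_eq_mul, coeff_zero,
    Finsupp.coe_zero, Pi.zero_apply] at hcoeff
  rw [Finset.sum_eq_single_of_mem i hi fun j _ hji => by rw [hoff j i hji, mul_zero]] at hcoeff
  exact (mul_eq_zero.mp hcoeff).resolve_right (hdiag i)

variable [Group G]

def lineStabilizer (c : MonoidAlgebra K G) : Subgroup G where
  carrier := {g | ∃ a : K, c * single g 1 = a • c}
  one_mem' := ⟨1, by rw [← one_def, mul_one, one_smul]⟩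
  mul_mem' := by
    rintro g h ⟨a, ha⟩ ⟨b, hb⟩
    refine ⟨a * b, ?_⟩
    rw [← mul_one (1 : K), ← single_mul_single, ← mul_assoc, ha, smul_mul_assoc, hb, smul_smul]
  inv_mem' := by
    rintro g ⟨a, ha⟩
    have hc : c = a • (c * single g⁻¹ 1) := by
      rw [← smul_mul_assoc, ← ha, mul_assoc, single_mul_single, mul_inv_cancel, mul_one,
        ← one_def, mul_one]
    refine ⟨a⁻¹, ?_⟩
    rcases eq_or_ne a 0 with rfl | ha0
    · rw [zero_smul] at hc
      simp [hc]
    · rwa [eq_comm, inv_smul_eq_iff₀ ha0]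

variable {c : MonoidAlgebra K G}

theorem coeff_ne_zero_of_mem_lineStabilizer (hc1 : c.coeff 1 ≠ 0) {g : G}
    (hg : g ∈ lineStabilizer c) : c.coeff g ≠ 0 := by
  obtain ⟨a, ha⟩ := hg
  have := congr(($ha).coeff g)
  rw [coeff_mul_single_apply, mul_inv_cancel, mul_one, coeff_smul_apply, smul_eq_mul] at this
  exact right_ne_zero_of_mul (this ▸ hc1)

theorem mul_mem_span_singleton_of_support_subset {v : MonoidAlgebra K G}
    (hv : ↑v.coeff.support ⊆ (lineStabilizer c : Set G)) : c * v ∈ K ∙ c := by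
  rw [← sum_coeff_single v, Finsupp.sum, Finset.mul_sum]
  refine Submodule.sum_mem _ fun g hg => ?_
  obtain ⟨a, ha⟩ := hv hg
  rw [← mul_one (v.coeff g), ← smul_single', mul_smul_comm, ha, smul_smul]
  exact Submodule.smul_mem _ _ (Submodule.mem_span_singleton_self c)

theorem span_mul_eq_span_singleton {H : Subgroup G} (hH : H ≤ lineStabilizer c) :
    Submodule.span K {x | ∃ v : MonoidAlgebra K G, ↑v.coeff.support ⊆ (H : Set G) ∧ x = c * v}
      = K ∙ c := by
  refine le_antisymm (Submodule.span_le.mpr ?_)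
    ((Submodule.span_singleton_le_iff_mem _ _).mpr ?_)
  · rintro _ ⟨v, hv, rfl⟩
    exact mul_mem_span_singleton_of_support_subset (hv.trans hH)
  · refine Submodule.subset_span ⟨1, fun g hg => ?_, (mul_one c).symm⟩
    rw [one_def, Finset.mem_coe, coeff_single, Finsupp.mem_support_single] at hg
    exact hg.1 ▸ H.one_mem

theorem index_le_finrank_range_mulLeft [Fintype G] {H : Subgroup G}
    (hc : ↑c.coeff.support ⊆ (H : Set G)) (hc1 : c.coeff 1 ≠ 0) :
    H.index ≤ Module.finrank K (LinearMap.range (LinearMap.mulLeft K c)) := by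
  let f : Quotient (QuotientGroup.rightRel H) → LinearMap.range (LinearMap.mulLeft K c) :=
    fun q => ⟨c * single q.out 1, single q.out 1, rfl⟩
  have hf : LinearIndependent K f := by
    refine LinearIndependent.of_comp (Submodule.subtype _) ?_
    refine linearIndependent_of_coeff_eq_zero _ (fun q => q.out)
      (fun q => by simpa [f] using hc1) fun q q' hqq' => ?_
    by_contra hne
    simp only [f, Function.comp_apply, Submodule.subtype_apply, coeff_mul_single_apply,
      mul_one] at hne
    refine hqq' ?_
    rw [← Quotient.out_eq q, ← Quotient.out_eq q']
    exact Quotient.sound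
      (QuotientGroup.rightRel_apply.mpr (hc (Finsupp.mem_support_iff.mpr hne)))
  calc H.index = Fintype.card (Quotient (QuotientGroup.rightRel H)) := by
        rw [Fintype.card_eq_nat_card, Subgroup.index,
          Nat.card_congr (QuotientGroup.quotientRightRelEquivQuotientLeftRel H)]
    _ ≤ _ := hf.fintype_card_le_finrank

/-- Weaker than the coding-theoretic notion: `#U` is not required to equal `dim C`. -/
def IsInformationSet (C : Submodule K (MonoidAlgebra K G)) (U : Finset G) : Prop :=
  ∀ x ∈ C, (∀ u ∈ U, x.coeff u = 0) → x = 0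

theorem exists_isInformationSet [Finite G] (C : Submodule K (MonoidAlgebra K G)) :
    ∃ U : Finset G, U.card ≤ Module.finrank K C ∧ IsInformationSet C U :=
  Submodule.exists_finset_card_le_finrank_forall_eq_zero
    (fun g => Finsupp.lapply g ∘ₗ (coeffLinearEquiv K).toLinearMap) C
    fun _ _ hx => ext (Finsupp.ext hx)

variable {C : Submodule K (MonoidAlgebra K G)} {U : Finset G} {x y : MonoidAlgebra K G}

theorem IsInformationSet.exists_coeff_mul_ne_zero (hU : IsInformationSet C U)
    (hI : IsRightIdeal C) (hx : x ∈ C) (hx0 : x ≠ 0) (g : G) : ∃ u ∈ U, x.coeff (u * g) ≠ 0 := by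
  by_contra! h
  refine (isUnit_single_one g⁻¹).mul_left_eq_zero.not.mpr hx0 (hU _ (hI x hx _) fun u hu => ?_)
  simpa using h u hu

theorem IsInformationSet.injOn_inv_mul [Fintype G] (hU : IsInformationSet C U)
    (hI : IsRightIdeal C) (hx : x ∈ C) (hx0 : x ≠ 0)
    (hcard : U.card * x.coeff.support.card ≤ Fintype.card G) :
    Set.InjOn (fun p : G × G => p.1⁻¹ * p.2) ↑(U ×ˢ x.coeff.support) := by
  have himage : (U ×ˢ x.coeff.support).image (fun p : G × G => p.1⁻¹ * p.2) = Finset.univ :=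
    Finset.eq_univ_of_forall fun g => by
      obtain ⟨u, hu, hne⟩ := hU.exists_coeff_mul_ne_zero hI hx hx0 g
      exact Finset.mem_image.mpr
        ⟨(u, u * g), Finset.mem_product.mpr ⟨hu, Finsupp.mem_support_iff.mpr hne⟩, by simp⟩
  refine Finset.injOn_of_card_image_eq (le_antisymm Finset.card_image_le ?_)
  rwa [himage, Finset.card_univ, Finset.card_product]

theorem IsInformationSet.eq_of_coeff_mul_inv_ne_zero [Fintype G] (hU : IsInformationSet C U)
    (hI : IsRightIdeal C) (hx : x ∈ C) (hx1 : x.coeff 1 ≠ 0)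
    (hcard : U.card * x.coeff.support.card ≤ Fintype.card G) {u v : G} (hu : u ∈ U)
    (hv : v ∈ U) (huv : x.coeff (u * v⁻¹) ≠ 0) : u = v := by
  have hx0 : x ≠ 0 := by rintro rfl; exact hx1 rfl
  have := hU.injOn_inv_mul hI hx hx0 hcard (x₁ := (u, u * v⁻¹)) (x₂ := (v, 1))
    (Finset.mem_coe.mpr (Finset.mem_product.mpr ⟨hu, Finsupp.mem_support_iff.mpr huv⟩))
    (Finset.mem_coe.mpr (Finset.mem_product.mpr ⟨hv, Finsupp.mem_support_iff.mpr hx1⟩))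
    (by simp)
  exact congr_arg Prod.fst this

theorem IsInformationSet.smul_eq_smul_of_coeff_one_ne_zero [Fintype G]
    (hU : IsInformationSet C U) (hI : IsRightIdeal C) (hx : x ∈ C) (hy : y ∈ C)
    (hx1 : x.coeff 1 ≠ 0) (hy1 : y.coeff 1 ≠ 0)
    (hxcard : U.card * x.coeff.support.card ≤ Fintype.card G)
    (hycard : U.card * y.coeff.support.card ≤ Fintype.card G) :
    y.coeff 1 • x = x.coeff 1 • y := by
  obtain ⟨v, hv, -⟩ := hU.exists_coeff_mul_ne_zero hI hx (by rintro rfl; exact hx1 rfl) 1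
  set z := y.coeff 1 • x - x.coeff 1 • y
  have hzU : ∀ u ∈ U, (z * single v 1).coeff u = 0 := by
    intro u hu
    rw [coeff_mul_single_apply, mul_one]
    by_cases huv : u = v
    · simp [z, huv, mul_comm]
    · have hxu : x.coeff (u * v⁻¹) = 0 := by
        by_contra h
        exact huv (hU.eq_of_coeff_mul_inv_ne_zero hI hx hx1 hxcard hu hv h)
      have hyu : y.coeff (u * v⁻¹) = 0 := by
        by_contra h
        exact huv (hU.eq_of_coeff_mul_inv_ne_zero hI hy hy1 hycard hu hv h)
      simp [z, hxu, hyu]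
  have hzC : z * single v 1 ∈ C := hI _ (C.sub_mem (C.smul_mem _ hx) (C.smul_mem _ hy)) _
  exact sub_eq_zero.mp ((isUnit_single_one v).mul_left_eq_zero.mp (hU _ hzC hzU))

theorem IsInformationSet.coe_lineStabilizer [Fintype G] (hU : IsInformationSet C U)
    (hI : IsRightIdeal C) (hx : x ∈ C) (hx1 : x.coeff 1 ≠ 0)
    (hcard : U.card * x.coeff.support.card ≤ Fintype.card G) :
    (lineStabilizer x : Set G) = x.coeff.support := by
  refine Set.Subset.antisymm
    (fun g hg => Finsupp.mem_support_iff.mpr (coeff_ne_zero_of_mem_lineStabilizer hx1 hg))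
    fun g hg => ?_
  set y := x * single g⁻¹ 1
  have hy1 : y.coeff 1 = x.coeff g := by simp [y]
  have hprop := hU.smul_eq_smul_of_coeff_one_ne_zero hI hx (hI x hx _) hx1
    (hy1 ▸ Finsupp.mem_support_iff.mp hg) hcard (by rwa [card_support_mul_single_one])
  rw [SetLike.mem_coe, ← inv_mem_iff]
  refine ⟨(x.coeff 1)⁻¹ * x.coeff g, ?_⟩
  rw [mul_smul, ← hy1, hprop, inv_smul_smul₀ hx1]

end MonoidAlgebra

theorem stmt4_general {K G : Type*} [Field K] [Group G] [Fintype G]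
    (C : Submodule K (MonoidAlgebra K G)) (hI : IsRightIdeal C)
    (d : ℕ) (hd : IsLeast {w | ∃ c ∈ C, c ≠ 0 ∧ c.coeff.support.card = w} d)
    (heq : d * Module.finrank K ↥C = Fintype.card G) :
    ∃ (H : Subgroup G) (c : MonoidAlgebra K G),
      (↑c.coeff.support ⊆ (H : Set G)) ∧ Nat.card H = d ∧
      Module.finrank K ↥(Submodule.span K {x : MonoidAlgebra K G |
        ∃ v : MonoidAlgebra K G, ↑v.coeff.support ⊆ (H : Set G) ∧ x = c * v}) = 1 ∧
      C = LinearMap.range (LinearMap.mulLeft K c) := by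
  obtain ⟨c₀, hc₀, hc₀0, hc₀d⟩ := hd.1
  obtain ⟨U, hUk, hU⟩ := exists_isInformationSet C
  have hUd : U.card * d ≤ Fintype.card G := by
    rw [← heq, Nat.mul_comm d]
    exact Nat.mul_le_mul_right d hUk
  obtain ⟨s, hs⟩ := Finsupp.support_nonempty_iff.mpr (coeff_eq_zero.not.mpr hc₀0)
  set c := c₀ * single s⁻¹ 1
  have hc : c ∈ C := hI _ hc₀ _
  have hc1 : c.coeff 1 ≠ 0 := by simpa [c] using hs
  have hcd : c.coeff.support.card = d := by rw [card_support_mul_single_one, hc₀d]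
  have hsupp := hU.coe_lineStabilizer hI hc hc1 (hcd ▸ hUd)
  have hHd : Nat.card (lineStabilizer c) = d := by
    rw [← SetLike.coe_sort_coe, hsupp, Nat.card_coe_set_eq, Set.ncard_coe_finset, hcd]
  have hindex : (lineStabilizer c).index = Module.finrank K C := by
    have hd0 : d ≠ 0 := fun h => Fintype.card_ne_zero (by rw [← heq, h, zero_mul])
    have := (lineStabilizer c).card_mul_index
    rw [hHd, Nat.card_eq_fintype_card, ← heq] at this
    exact Nat.eq_of_mul_eq_mul_left (Nat.pos_of_ne_zero hd0) this
  refine ⟨lineStabilizer c, c, hsupp.ge, hHd, ?_, ?_⟩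
  · rw [span_mul_eq_span_singleton le_rfl, finrank_span_singleton fun h => hc1 (by simp [h])]
  · refine (Submodule.eq_of_le_of_finrank_le ?_ ?_).symm
    · rintro _ ⟨v, rfl⟩
      exact hI c hc v
    · exact hindex ▸ index_le_finrank_range_mulLeft hsupp.ge hc1

/-- If `d(C) · dim C = |G|`, then `C = c·KG` for some `c` supported on a subgroup `H`
with `|H| = d(C)` and `dim_K (c·KH) = 1`. -/
theorem stmt4 {K G : Type*} [Field K] [Group G] [Fintype G]
    (C : Submodule K (MonoidAlgebra K G)) (hI : IsRightIdeal C) (hC : C ≠ ⊥)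
    (d : ℕ) (hd : IsLeast {w | ∃ c ∈ C, c ≠ 0 ∧ c.coeff.support.card = w} d)
    (heq : d * Module.finrank K ↥C = Fintype.card G) :
    ∃ (H : Subgroup G) (c : MonoidAlgebra K G),
      (↑c.coeff.support ⊆ (H : Set G)) ∧ Nat.card H = d ∧
      Module.finrank K ↥(Submodule.span K {x : MonoidAlgebra K G |
        ∃ v : MonoidAlgebra K G, ↑v.coeff.support ⊆ (H : Set G) ∧ x = c * v}) = 1 ∧
      C = LinearMap.range (LinearMap.mulLeft K c) :=
  stmt4_general C hI d hd heq
end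

section
/- Let K be a field, G a finite group, H a subgroup of G, and c \in KH a nonzero element such that the right ideal c·KH of KH is 1-dimensional over K. Then the right ideal C = c·KG of KG satisfies dim_K(C) = [G : H] and d(C) \cdot dim_K(C) = |G|, where d(C) = |H| = wt(c). -/
open MonoidAlgebra

attribute [local instance] Classical.propDecidable

/-! Since `c·KH` is one-dimensional and contains `c`, every translate `c·h` with `h ∈ H` is a
multiple of `c`; evaluating at a point of the support shows that the support of `c` is all of `H`.
Translating `c` by representatives `t` of the right cosets `Ht` thus gives elements with the
pairwise disjoint supports `Ht`. They span `c·KG` and are linearly independent, so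
`dim c·KG = [G : H]`, and a nonzero combination of them has a whole coset `Ht` in its support,
so its weight is at least `|H|`. -/

namespace MonoidAlgebra

variable {K G : Type*} [Field K] [Group G] {H : Subgroup G} {c : MonoidAlgebra K G}

theorem coeff_ne_zero_iff_mem_of_mul_single_mem_span (hc : c ≠ 0)
    (hsupp : ↑c.coeff.support ⊆ (H : Set G)) (hH : ∀ h ∈ H, c * single h 1 ∈ K ∙ c) {g : G} :
    c.coeff g ≠ 0 ↔ g ∈ H := by
  refine ⟨fun hg => hsupp (Finsupp.mem_support_iff.2 hg), fun hg hcg => ?_⟩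
  obtain ⟨g₀, hg₀⟩ := Finsupp.support_nonempty_iff.2 (mt coeff_eq_zero.1 hc)
  obtain ⟨l, hl⟩ := Submodule.mem_span_singleton.1 (hH _ (H.mul_mem (H.inv_mem (hsupp hg₀)) hg))
  -- evaluating `l • c = c * single (g₀⁻¹ * g) 1` at `g` gives `l * c g = c g₀`
  have := congrArg (fun x => x.coeff g) hl
  simp only [coeff_smul, Finsupp.smul_apply, smul_eq_mul, hcg, mul_zero, coeff_mul_single_apply,
    mul_inv_rev, inv_inv, mul_inv_cancel_left, mul_one] at this
  exact Finsupp.mem_support_iff.1 hg₀ this.symm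

theorem card_support_eq_natCard_of_mul_single_mem_span (hc : c ≠ 0)
    (hsupp : ↑c.coeff.support ⊆ (H : Set G)) (hH : ∀ h ∈ H, c * single h 1 ∈ K ∙ c) :
    c.coeff.support.card = Nat.card H := by
  have hset : (c.coeff.support : Set G) = H := Set.ext fun g => by
    simpa using coeff_ne_zero_iff_mem_of_mul_single_mem_span hc hsupp hH
  rw [← Nat.card_eq_finsetCard]
  exact Nat.card_congr (Equiv.setCongr hset)

variable (H c) in
noncomputable def cosetTranslate (q : Quotient (QuotientGroup.rightRel H)) : MonoidAlgebra K G :=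
  c * single q.out 1

theorem coeff_cosetTranslate_mul_out (hsupp : ↑c.coeff.support ⊆ (H : Set G)) {h : G}
    (hh : h ∈ H) (q q' : Quotient (QuotientGroup.rightRel H)) :
    (cosetTranslate H c q').coeff (h * q.out) = if q' = q then c.coeff h else 0 := by
  rw [cosetTranslate, coeff_mul_single_apply, mul_one]
  split_ifs with hq
  · rw [hq, mul_inv_cancel_right]
  · refine Finsupp.notMem_support_iff.1 fun hmem => hq ?_
    have := H.mul_mem (H.inv_mem hh) (hsupp hmem)
    rw [← mul_assoc, ← mul_assoc, inv_mul_cancel, one_mul] at this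
    exact Quotient.out_equiv_out.1 (QuotientGroup.rightRel_apply.2 this)

theorem coeff_linearCombination_cosetTranslate (hsupp : ↑c.coeff.support ⊆ (H : Set G))
    {h : G} (hh : h ∈ H) (l : Quotient (QuotientGroup.rightRel H) →₀ K)
    (q : Quotient (QuotientGroup.rightRel H)) :
    (Finsupp.linearCombination K (cosetTranslate H c) l).coeff (h * q.out) = l q * c.coeff h := by
  rw [Finsupp.linearCombination_apply, coeff_finsuppSum, Finsupp.sum, Finset.sum_apply']
  simp only [coeff_smul, Finsupp.smul_apply, smul_eq_mul, coeff_cosetTranslate_mul_out hsupp hh,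
    mul_ite, mul_zero, Finset.sum_ite_eq', Finsupp.mem_support_iff]
  split_ifs with hq
  · rfl
  · rw [not_not.1 hq, zero_mul]

theorem linearIndependent_cosetTranslate (hsupp : ↑c.coeff.support ⊆ (H : Set G))
    (hc₁ : c.coeff 1 ≠ 0) : LinearIndependent K (cosetTranslate H c) := by
  refine linearIndependent_iff.2 fun l hl => Finsupp.ext fun q => ?_
  have := coeff_linearCombination_cosetTranslate hsupp H.one_mem l q
  rw [hl, one_mul] at this
  exact (mul_eq_zero.1 this.symm).resolve_right hc₁

theorem range_mulLeft_eq_span_cosetTranslate (hH : ∀ h ∈ H, c * single h 1 ∈ K ∙ c) :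
    LinearMap.range (LinearMap.mulLeft K c) =
      Submodule.span K (Set.range (cosetTranslate H c)) := by
  have hspan : LinearMap.range (LinearMap.mulLeft K c) =
      Submodule.span K (Set.range fun g : G => c * single g 1) := by
    rw [LinearMap.range_eq_map, ← (basis G K).span_eq, Submodule.map_span, ← Set.range_comp]
    rfl
  refine hspan ▸ le_antisymm (Submodule.span_le.2 ?_) (Submodule.span_mono ?_)
  · refine Set.range_subset_iff.2 fun g => ?_
    set q : Quotient (QuotientGroup.rightRel H) := ⟦g⟧
    have hgq : g * q.out⁻¹ ∈ H := QuotientGroup.rightRel_apply.1 (Quotient.mk_out g)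
    obtain ⟨l, hl⟩ := Submodule.mem_span_singleton.1 (hH _ hgq)
    have : c * single g 1 = l • cosetTranslate H c q := by
      rw [cosetTranslate, ← smul_mul_assoc, hl, mul_assoc, single_mul_single, one_mul,
        inv_mul_cancel_right]
    rw [this]
    exact Submodule.smul_mem _ l (Submodule.subset_span ⟨q, rfl⟩)
  · rintro _ ⟨q, rfl⟩
    exact ⟨q.out, rfl⟩

theorem finrank_range_mulLeft_eq_index [H.FiniteIndex] (hc : c ≠ 0)
    (hsupp : ↑c.coeff.support ⊆ (H : Set G)) (hH : ∀ h ∈ H, c * single h 1 ∈ K ∙ c) :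
    Module.finrank K (LinearMap.range (LinearMap.mulLeft K c)) = H.index := by
  let e := QuotientGroup.quotientRightRelEquivQuotientLeftRel H
  have : Finite (Quotient (QuotientGroup.rightRel H)) := .of_equiv _ e.symm
  have := Fintype.ofFinite (Quotient (QuotientGroup.rightRel H))
  have hc₁ := (coeff_ne_zero_iff_mem_of_mul_single_mem_span hc hsupp hH).2 H.one_mem
  rw [range_mulLeft_eq_span_cosetTranslate hH,
    finrank_span_eq_card (linearIndependent_cosetTranslate hsupp hc₁), ← Nat.card_eq_fintype_card,
    Nat.card_congr e, Subgroup.index]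

theorem natCard_le_card_support_of_mem_range_mulLeft (hc : c ≠ 0)
    (hsupp : ↑c.coeff.support ⊆ (H : Set G)) (hH : ∀ h ∈ H, c * single h 1 ∈ K ∙ c)
    {x : MonoidAlgebra K G} (hx : x ∈ LinearMap.range (LinearMap.mulLeft K c)) (hx₀ : x ≠ 0) :
    Nat.card H ≤ x.coeff.support.card := by
  rw [range_mulLeft_eq_span_cosetTranslate hH, ← Finsupp.range_linearCombination] at hx
  obtain ⟨l, rfl⟩ := hx
  obtain ⟨q, hq⟩ : ∃ q, l q ≠ 0 :=
    not_forall.1 fun hl => hx₀ (by rw [(Finsupp.ext hl : l = 0), map_zero])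
  -- the support of `x` contains the whole coset `H * q.out`
  rw [← Nat.card_eq_finsetCard]
  refine Nat.card_le_card_of_injective (fun h => ⟨h * q.out, ?_⟩)
    fun h₁ h₂ heq => Subtype.ext (mul_right_cancel (congrArg Subtype.val heq))
  rw [Finsupp.mem_support_iff, coeff_linearCombination_cosetTranslate hsupp h.2]
  exact mul_ne_zero hq ((coeff_ne_zero_iff_mem_of_mul_single_mem_span hc hsupp hH).2 h.2)

end MonoidAlgebra

/-- If `c ∈ KH` is nonzero and `c·KH` is one-dimensional, then `C = c·KG` satisfies
`dim C = [G:H]`, `wt c = |H|`, `d(C) = |H|` and `d(C) · dim C = |G|`. -/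
theorem stmt5 {K G : Type*} [Field K] [Group G] [Fintype G]
    (H : Subgroup G) (c : MonoidAlgebra K G) (hc : c ≠ 0)
    (hsupp : ↑c.coeff.support ⊆ (H : Set G))
    (hdim : Module.finrank K ↥(Submodule.span K {x : MonoidAlgebra K G |
      ∃ v : MonoidAlgebra K G, ↑v.coeff.support ⊆ (H : Set G) ∧ x = c * v}) = 1) :
    Module.finrank K ↥(LinearMap.range (LinearMap.mulLeft K c)) = H.index ∧
    c.coeff.support.card = Nat.card H ∧
    IsLeast {w | ∃ x ∈ LinearMap.range (LinearMap.mulLeft K c),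
      x ≠ 0 ∧ x.coeff.support.card = w} (Nat.card H) ∧
    Nat.card H * Module.finrank K ↥(LinearMap.range (LinearMap.mulLeft K c)) =
      Fintype.card G := by
  have hsingle : ∀ g ∈ H, ↑(single g (1 : K)).coeff.support ⊆ (H : Set G) := fun g hg =>
    (Finset.coe_subset.2 Finsupp.support_single_subset).trans (by simpa using hg)
  have hH : ∀ h ∈ H, c * single h 1 ∈ K ∙ c := fun h hh => by
    rw [← eq_span_singleton_of_mem_of_finrank_eq_one hdim
      (Submodule.subset_span ⟨1, hsingle 1 H.one_mem, (mul_one c).symm⟩) hc]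
    exact Submodule.subset_span ⟨single h 1, hsingle h hh, rfl⟩
  have hfinrank := finrank_range_mulLeft_eq_index hc hsupp hH
  have hwt := card_support_eq_natCard_of_mul_single_mem_span hc hsupp hH
  refine ⟨hfinrank, hwt, ⟨⟨c, ⟨1, mul_one c⟩, hc, hwt⟩, ?_⟩, ?_⟩
  · rintro _ ⟨x, hx, hx₀, rfl⟩
    exact natCard_le_card_support_of_mem_range_mulLeft hc hsupp hH hx hx₀
  · rw [hfinrank, Subgroup.card_mul_index, Nat.card_eq_fintype_card]
end

section
/- Let p be a prime, K a field of characteristic p, and C a nonzero right ideal of KG (G a finite group) with d(C) \cdot dim_K(C) = |G|. Then C = e·KG for some idempotent e \in KG (e = e^2) if and only if p does not divide d(C). -/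
/-!
Translate a weight-`d` element of `C` to some `c` with `c(1) ≠ 0`. The right translates `c g` all
have weight `d` and their supports cover `G`, so a basis of their span chosen among them has at
least `|G| / d = dim C` elements: it spans `C`, and the supports of its members partition `G`.
Hence every weight-`d` element of `C` is a multiple of a single basis vector, which gives
`c u ∈ K c` for `u ∈ supp c`. So `H = supp c` is a subgroup and `c² = d c(1) c`.
If `p ∤ d`, then `c / (d c(1))` is an idempotent generator of `C = c KG`. If `p ∣ d`, then `c² = 0`,
and the coefficient at `1` of `c v c` vanishes for every `v`, because `1 ∉ H g H` for `g ∉ H`;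
an idempotent generator `e = c v` would give `c(1) = (e c)(1) = (c v c)(1) = 0`.
-/

open MonoidAlgebra

attribute [local instance] Classical.propDecidable

open Finset Module Submodule

theorem Finset.pairwiseDisjoint_of_sum_card_le_card_biUnion {ι α : Type*} [DecidableEq ι]
    [DecidableEq α] {s : Finset ι} {t : ι → Finset α}
    (h : ∑ i ∈ s, #(t i) ≤ #(s.biUnion t)) : (s : Set ι).PairwiseDisjoint t := by
  induction s using Finset.induction_on with
  | empty => simp
  | insert a s ha ih =>
    rw [sum_insert ha, biUnion_insert] at h
    have hunion := card_union_add_card_inter (t a) (s.biUnion t)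
    have hle : #(s.biUnion t) ≤ ∑ i ∈ s, #(t i) := card_biUnion_le
    have hdisj : Disjoint (t a) (s.biUnion t) := by
      rw [disjoint_iff_inter_eq_empty, ← card_eq_zero]
      omega
    rw [coe_insert]
    exact (ih (by omega)).insert fun j hj _ => (disjoint_biUnion_right _ _ _).1 hdisj j hj

namespace MonoidAlgebra

section Field

variable {K X : Type*} [Field K]

theorem support_subset_biUnion_of_mem_span {B : Finset (MonoidAlgebra K X)} {x : MonoidAlgebra K X}
    (hx : x ∈ span K (B : Set (MonoidAlgebra K X))) :
    x.coeff.support ⊆ B.biUnion fun b => b.coeff.support := by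
  refine mem_supported.1 (span_le.2 (fun b hb => mem_supported.2 ?_) hx)
  exact_mod_cast subset_biUnion_of_mem (fun b : MonoidAlgebra K X => b.coeff.support) hb

theorem exists_eq_smul_of_mem_span {B : Finset (MonoidAlgebra K X)} {d : ℕ} (hd : 0 < d)
    (hB : ∀ b ∈ B, #b.coeff.support = d)
    (hdisj : (B : Set (MonoidAlgebra K X)).PairwiseDisjoint fun b => b.coeff.support)
    {x : MonoidAlgebra K X} (hx : x ∈ span K (B : Set (MonoidAlgebra K X)))
    (hxd : #x.coeff.support = d) : ∃ b ∈ B, ∃ a : K, x = a • b := by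
  obtain ⟨f, hfB, rfl⟩ := mem_span_finset.1 hx
  have hcoeff : ∀ b ∈ B, ∀ y ∈ b.coeff.support,
      (∑ b ∈ B, f b • b).coeff y = f b * b.coeff y := by
    intro b hb y hy
    rw [coeff_sum, Finset.sum_apply', sum_eq_single b]
    · rfl
    · intro b' hb' hne
      rw [coeff_smul, Finsupp.smul_apply, Finsupp.notMem_support_iff.1, smul_zero]
      exact disjoint_left.1 (hdisj hb hb' hne.symm) hy
    · exact fun h => absurd hb h
  set T := B.filter fun b => f b ≠ 0
  have hsupp : (∑ b ∈ B, f b • b).coeff.support = T.biUnion fun b => b.coeff.support := by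
    ext y
    simp only [mem_biUnion, T, mem_filter, Finsupp.mem_support_iff]
    constructor
    · intro hy
      obtain ⟨b, hb, hyb⟩ := mem_biUnion.1 (support_subset_biUnion_of_mem_span hx
        (Finsupp.mem_support_iff.2 hy))
      rw [hcoeff b hb y hyb] at hy
      exact ⟨b, ⟨hb, left_ne_zero_of_mul hy⟩, Finsupp.mem_support_iff.1 hyb⟩
    · rintro ⟨b, ⟨hb, hfb⟩, hyb⟩
      rw [hcoeff b hb y (Finsupp.mem_support_iff.2 hyb)]
      exact mul_ne_zero hfb hyb
  have hT : #T * d = d := by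
    refine Eq.trans ?_ hxd
    rw [hsupp, card_biUnion (hdisj.subset (coe_subset.2 (filter_subset _ _))),
      sum_congr rfl fun b hb => hB b (mem_of_mem_filter b hb), sum_const, smul_eq_mul]
  obtain ⟨b, hTb⟩ := card_eq_one.1 (Nat.eq_of_mul_eq_mul_right hd (hT.trans (one_mul d).symm))
  have hbT : b ∈ T := hTb ▸ mem_singleton_self b
  refine ⟨b, mem_of_mem_filter b hbT, f b, ?_⟩
  rw [← sum_filter_of_ne fun b _ hb => left_ne_zero_of_smul hb]
  change ∑ b ∈ T, f b • b = _
  rw [hTb, sum_singleton]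

theorem exists_finset_span_eq_pairwiseDisjoint_of_card_mul_finrank_eq [Fintype X]
    {V : Submodule K (MonoidAlgebra K X)} {S : Set (MonoidAlgebra K X)} {d : ℕ} (hd : 0 < d) (hSV : S ⊆ V)
    (hS : ∀ s ∈ S, #s.coeff.support = d) (hcover : ∀ x, ∃ s ∈ S, x ∈ s.coeff.support)
    (heq : d * finrank K V = Fintype.card X) :
    ∃ B : Finset (MonoidAlgebra K X), ↑B ⊆ S ∧ span K (B : Set (MonoidAlgebra K X)) = V ∧
      (B : Set (MonoidAlgebra K X)).PairwiseDisjoint fun b => b.coeff.support := by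
  have : Module.Finite K (MonoidAlgebra K X) := .of_basis (basis X K)
  obtain ⟨b, hbS, hspan, hli⟩ := exists_linearIndependent K S
  set B := hli.setFinite.toFinset
  have hBb : (B : Set (MonoidAlgebra K X)) = b := hli.setFinite.coe_toFinset
  have hBS : ↑B ⊆ S := hBb ▸ hbS
  have hBli : LinearIndepOn K id (B : Set (MonoidAlgebra K X)) := hBb ▸ hli
  have hBV : span K (B : Set (MonoidAlgebra K X)) ≤ V := span_le.2 (hBS.trans hSV)
  have hBrank : #B ≤ finrank K V := by
    rw [← finrank_span_finset_eq_card hBli]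
    exact finrank_mono hBV
  have hBcover : (univ : Finset X) ⊆ B.biUnion fun b => b.coeff.support := by
    intro x _
    obtain ⟨s, hs, hxs⟩ := hcover x
    exact support_subset_biUnion_of_mem_span (hBb ▸ hspan ▸ subset_span hs) hxs
  have hsum : ∑ b ∈ B, #b.coeff.support = #B * d := by
    rw [sum_congr rfl fun b hb => hS b (hBS hb), sum_const, smul_eq_mul]
  have hcard : Fintype.card X ≤ #(B.biUnion fun b => b.coeff.support) := card_le_card hBcover
  have hunion : #(B.biUnion fun b => b.coeff.support) ≤ ∑ b ∈ B, #b.coeff.support :=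
    card_biUnion_le
  have hrank : finrank K V ≤ #B := Nat.le_of_mul_le_mul_right (by nlinarith) hd
  refine ⟨B, hBS, eq_of_le_of_finrank_le hBV ?_, pairwiseDisjoint_of_sum_card_le_card_biUnion ?_⟩
  · rwa [finrank_span_finset_eq_card hBli]
  · nlinarith

end Field

section Group

variable {K G : Type*} [Field K] [Group G]

theorem coeff_mul_inv_eq_mul_coeff {c : MonoidAlgebra K G} {u : G} {μ : K}
    (h : c * single u 1 = μ • c) (y : G) : c.coeff (y * u⁻¹) = μ * c.coeff y := by
  simpa using congrArg (fun x => x.coeff y) h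

theorem exists_subgroup_coe_eq_support {c : MonoidAlgebra K G} (h1 : c.coeff 1 ≠ 0)
    (hμ : ∀ u ∈ c.coeff.support, ∃ μ : K, c * single u 1 = μ • c) :
    ∃ H : Subgroup G, (H : Set G) = c.coeff.support := by
  refine ⟨Subgroup.ofDiv _ ⟨1, Finsupp.mem_support_iff.2 h1⟩ fun y hy u hu => ?_, rfl⟩
  obtain ⟨μ, hμu⟩ := hμ u hu
  have hμ0 : μ ≠ 0 := by
    rintro rfl
    exact h1 (by simpa using coeff_mul_inv_eq_mul_coeff hμu u)
  rw [mem_coe, Finsupp.mem_support_iff, coeff_mul_inv_eq_mul_coeff hμu y]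
  exact mul_ne_zero hμ0 (Finsupp.mem_support_iff.1 hy)

theorem mul_self_eq_smul {c : MonoidAlgebra K G}
    (hμ : ∀ u ∈ c.coeff.support, ∃ μ : K, c * single u 1 = μ • c) :
    c * c = ((#c.coeff.support : K) * c.coeff 1) • c := by
  have hterm : ∀ u ∈ c.coeff.support, c * single u (c.coeff u) = c.coeff 1 • c := by
    intro u hu
    obtain ⟨μ, hμu⟩ := hμ u hu
    have hμc : μ * c.coeff u = c.coeff 1 := by
      simpa using (coeff_mul_inv_eq_mul_coeff hμu u).symm
    rw [← mul_one (c.coeff u), ← smul_single', mul_smul_comm, hμu, smul_smul, mul_comm, hμc]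
  calc c * c = ∑ u ∈ c.coeff.support, c * single u (c.coeff u) := by
        conv_lhs => arg 2; rw [← sum_coeff_single c]
        rw [Finsupp.sum, mul_sum]
    _ = ((#c.coeff.support : K) * c.coeff 1) • c := by
        rw [sum_congr rfl hterm, sum_const, ← Nat.cast_smul_eq_nsmul K, smul_smul]

theorem coeff_one_mul_mul_eq_zero {c : MonoidAlgebra K G} (h1 : c.coeff 1 ≠ 0)
    (hμ : ∀ u ∈ c.coeff.support, ∃ μ : K, c * single u 1 = μ • c) (hcc : c * c = 0)
    (v : MonoidAlgebra K G) : (c * v * c).coeff 1 = 0 := by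
  obtain ⟨H, hH⟩ := exists_subgroup_coe_eq_support h1 hμ
  have hmemH (g : G) : g ∈ H ↔ c.coeff g ≠ 0 := by
    rw [← SetLike.mem_coe, hH, mem_coe, Finsupp.mem_support_iff]
  induction v using MonoidAlgebra.induction_linear with
  | zero => simp
  | add x y hx hy => rw [mul_add, add_mul, coeff_add, Finsupp.add_apply, hx, hy, add_zero]
  | single g r =>
    rw [← mul_one r, ← smul_single', mul_smul_comm, smul_mul_assoc, coeff_smul,
      Finsupp.smul_apply]
    suffices (c * single g 1 * c).coeff 1 = 0 by rw [this, smul_zero]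
    by_cases hg : g ∈ H
    · obtain ⟨μ, hμg⟩ := hμ g (Finsupp.mem_support_iff.2 ((hmemH g).1 hg))
      rw [hμg, smul_mul_assoc, hcc, smul_zero]
      rfl
    · rw [coeff_mul_apply_left, Finsupp.sum]
      refine sum_eq_zero fun h _ => ?_
      rw [coeff_mul_single_apply, mul_one, mul_one]
      by_contra hne
      have hgh : h * g⁻¹ ∈ H := (hmemH _).2 (left_ne_zero_of_mul hne)
      have hh : h⁻¹ ∈ H := (hmemH _).2 (right_ne_zero_of_mul hne)
      exact hg (by simpa using H.mul_mem hh hgh)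

theorem exists_mul_self_eq_and_range_mulLeft_eq {c : MonoidAlgebra K G}
    (hμ : ∀ u ∈ c.coeff.support, ∃ μ : K, c * single u 1 = μ • c)
    (hγ : (#c.coeff.support : K) * c.coeff 1 ≠ 0) :
    ∃ e : MonoidAlgebra K G, e * e = e ∧
      LinearMap.range (LinearMap.mulLeft K e) = LinearMap.range (LinearMap.mulLeft K c) := by
  set γ : K := (#c.coeff.support : K) * c.coeff 1
  refine ⟨γ⁻¹ • c, ?_, ?_⟩
  · rw [smul_mul_smul_comm, mul_self_eq_smul hμ, smul_smul, mul_assoc, inv_mul_cancel₀ hγ,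
      mul_one]
  · have hmulLeft : LinearMap.mulLeft K (γ⁻¹ • c) = γ⁻¹ • LinearMap.mulLeft K c := by
      ext
      simp
    rw [hmulLeft, LinearMap.range_smul _ _ (inv_ne_zero hγ)]

theorem range_mulLeft_ne_of_mul_self_eq_zero {c : MonoidAlgebra K G} (h1 : c.coeff 1 ≠ 0)
    (hμ : ∀ u ∈ c.coeff.support, ∃ μ : K, c * single u 1 = μ • c) (hcc : c * c = 0)
    {e : MonoidAlgebra K G} (he : e * e = e) :
    LinearMap.range (LinearMap.mulLeft K e) ≠ LinearMap.range (LinearMap.mulLeft K c) := by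
  intro hec
  obtain ⟨z, hz⟩ : c ∈ LinearMap.range (LinearMap.mulLeft K e) := hec ▸ ⟨1, mul_one c⟩
  obtain ⟨v, hv⟩ : e ∈ LinearMap.range (LinearMap.mulLeft K c) := hec ▸ ⟨e, he⟩
  rw [LinearMap.mulLeft_apply] at hz hv
  have hc : e * c = c := by rw [← hz, ← mul_assoc, he]
  exact h1 (by rw [← hc, ← hv]; exact coeff_one_mul_mul_eq_zero h1 hμ hcc v)

end Group

end MonoidAlgebra

section RightIdeal

variable {K G : Type*} [Field K] [Group G]

theorem IsRightIdeal.exists_coeff_one_ne_zero {C : Submodule K (MonoidAlgebra K G)}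
    (hI : IsRightIdeal C) {c : MonoidAlgebra K G} (hc : c ∈ C) (hc0 : c ≠ 0) :
    ∃ c' ∈ C, c'.coeff 1 ≠ 0 ∧ #c'.coeff.support = #c.coeff.support := by
  obtain ⟨s, hs⟩ : c.coeff.support.Nonempty :=
    Finsupp.support_nonempty_iff.2 (mt coeff_eq_zero.1 hc0)
  refine ⟨c * single s⁻¹ 1, hI c hc _, ?_, ?_⟩
  · simpa using Finsupp.mem_support_iff.1 hs
  · rw [support_coeff_mul_single c 1 (by simp), card_map]

theorem IsRightIdeal.eq_range_mulLeft_and_mul_single_eq_smul [Fintype G]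
    {C : Submodule K (MonoidAlgebra K G)} (hI : IsRightIdeal C) {c : MonoidAlgebra K G}
    (hc : c ∈ C) (h1 : c.coeff 1 ≠ 0)
    (heq : #c.coeff.support * finrank K C = Fintype.card G) :
    C = LinearMap.range (LinearMap.mulLeft K c) ∧
      ∀ u ∈ c.coeff.support, ∃ μ : K, c * single u 1 = μ • c := by
  set d := #c.coeff.support
  have hd : 0 < d := card_pos.2 ⟨1, Finsupp.mem_support_iff.2 h1⟩
  have hcard (g : G) : #(c * single g 1).coeff.support = d := by
    rw [support_coeff_mul_single c 1 (by simp), card_map]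
  have hmem (g : G) : g ∈ (c * single g 1).coeff.support := by simpa using h1
  obtain ⟨B, hBS, hBC, hdisj⟩ := exists_finset_span_eq_pairwiseDisjoint_of_card_mul_finrank_eq hd
    (S := Set.range fun g => c * single g 1) (Set.range_subset_iff.2 fun g => hI c hc _)
    (Set.forall_mem_range.2 hcard) (fun g => ⟨_, ⟨g, rfl⟩, hmem g⟩) heq
  have hBd : ∀ b ∈ B, #b.coeff.support = d := fun b hb => by
    obtain ⟨g, rfl⟩ := hBS hb
    exact hcard g
  constructor
  · refine le_antisymm ?_ fun _ ⟨v, hv⟩ => hv ▸ hI c hc v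
    rw [← hBC, span_le]
    intro _ hb
    obtain ⟨g, rfl⟩ := hBS hb
    exact ⟨single g 1, rfl⟩
  · intro u hu
    have hsmul (g : G) : ∃ b ∈ B, ∃ a : K, c * single g 1 = a • b :=
      exists_eq_smul_of_mem_span hd hBd hdisj (hBC ▸ hI c hc _) (hcard g)
    obtain ⟨b, hb, a, hab⟩ := hsmul 1
    obtain ⟨b', hb', a', hab'⟩ := hsmul u
    rw [← one_def, mul_one] at hab
    have ha : a ≠ 0 := by
      rintro rfl
      exact h1 (by rw [hab, zero_smul]; rfl)
    have hbb' : b' = b := by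
      by_contra hne
      have hub' : u ∈ b'.coeff.support := Finsupp.support_smul (hab' ▸ hmem u)
      have hub : u ∈ b.coeff.support := Finsupp.support_smul (hab ▸ hu)
      exact disjoint_left.1 (hdisj hb' hb hne) hub' hub
    exact ⟨a' / a, by rw [hab', hbb', hab, smul_smul, div_mul_cancel₀ _ ha]⟩

end RightIdeal

theorem stmt7_general {K G : Type*} [Field K] [Group G] [Fintype G]
    (p : ℕ) [CharP K p]
    (C : Submodule K (MonoidAlgebra K G)) (hI : IsRightIdeal C)
    (d : ℕ) (hd : IsLeast {w | ∃ c ∈ C, c ≠ 0 ∧ c.coeff.support.card = w} d)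
    (heq : d * Module.finrank K ↥C = Fintype.card G) :
    (∃ e : MonoidAlgebra K G, e * e = e ∧
        C = LinearMap.range (LinearMap.mulLeft K e)) ↔ ¬ p ∣ d := by
  obtain ⟨c₀, hc₀C, hc₀, rfl⟩ := hd.1
  obtain ⟨c, hcC, h1, hcd⟩ := hI.exists_coeff_one_ne_zero hc₀C hc₀
  rw [← hcd] at heq ⊢
  obtain ⟨hCc, hμ⟩ := hI.eq_range_mulLeft_and_mul_single_eq_smul hcC h1 heq
  rw [← CharP.cast_eq_zero_iff K p, hCc]
  constructor
  · rintro ⟨e, he, hce⟩ hd0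
    have hcc : c * c = 0 := by rw [mul_self_eq_smul hμ, hd0, zero_mul, zero_smul]
    exact range_mulLeft_ne_of_mul_self_eq_zero h1 hμ hcc he hce.symm
  · intro hd0
    obtain ⟨e, he, hec⟩ := exists_mul_self_eq_and_range_mulLeft_eq hμ (mul_ne_zero hd0 h1)
    exact ⟨e, he, hec.symm⟩

/-- In characteristic `p`, a right ideal with `d(C) · dim C = |G|` is generated by an
idempotent iff `p ∤ d(C)`. -/
theorem stmt7 {K G : Type*} [Field K] [Group G] [Fintype G]
    (p : ℕ) [Fact p.Prime] [CharP K p]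
    (C : Submodule K (MonoidAlgebra K G)) (hI : IsRightIdeal C) (hC : C ≠ ⊥)
    (d : ℕ) (hd : IsLeast {w | ∃ c ∈ C, c ≠ 0 ∧ c.coeff.support.card = w} d)
    (heq : d * Module.finrank K ↥C = Fintype.card G) :
    (∃ e : MonoidAlgebra K G, e * e = e ∧
        C = LinearMap.range (LinearMap.mulLeft K e)) ↔ ¬ p ∣ d :=
  stmt7_general p C hI d hd heq
end

section
/- Let K be a field, G a finite group, C and C' right ideals of KG such that for every x \in G there is c \in C with nonzero coefficient at x, and w = \sum_{x\in G} \lambda_x x \in C'. The map \varphi_w : C \to KG, c \mapsto c * w (Schur product) is KG-linear (i.e., \varphi_w(cg) = \varphi_w(c)g for all c \in C and g \in G) if and only if all coefficients \lambda_x are equal, i.e., w lies in the trivial submodule K·(\sum_{g\in G} g). -/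
open MonoidAlgebra

attribute [local instance] Classical.propDecidable

lemma schur_apply {K G : Type*} [Semiring K] (f g : MonoidAlgebra K G) (x : G) :
    (schur f g).coeff x = f.coeff x * g.coeff x := rfl

lemma mul_of_apply {K G : Type*} [Field K] [Group G]
    (f : MonoidAlgebra K G) (g x : G) :
    (f * MonoidAlgebra.of K G g).coeff x = f.coeff (x * g⁻¹) := by
  rw [MonoidAlgebra.of_apply, MonoidAlgebra.coeff_mul_single_apply, mul_one]

lemma sum_of_apply {K G : Type*} [Field K] [Group G] [Fintype G] (x : G) :
    (∑ g : G, MonoidAlgebra.of K G g).coeff x = 1 := by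
  classical
  rw [MonoidAlgebra.coeff_sum, Finset.sum_apply']
  simp [MonoidAlgebra.of_apply, MonoidAlgebra.coeff_single, Finsupp.single_apply]

/-- `φ_w : c ↦ c * w` (Schur product) is `KG`-linear iff `w` has all coefficients
equal, i.e. `w` lies in the trivial submodule `K · ∑_{g} g`. -/
theorem stmt10 {K G : Type*} [Field K] [Group G] [Fintype G]
    (C C' : Submodule K (MonoidAlgebra K G))
    (hC : IsRightIdeal C) (hC' : IsRightIdeal C')
    (hfull : ∀ x : G, ∃ c ∈ C, c.coeff x ≠ 0)
    (w : MonoidAlgebra K G) (hw : w ∈ C') :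
    (∀ c ∈ C, ∀ g : G,
        schur (c * MonoidAlgebra.of K G g) w = schur c w * MonoidAlgebra.of K G g) ↔
      ∃ μ : K, w = μ • ∑ g : G, MonoidAlgebra.of K G g := by
  constructor
  · intro h
    refine ⟨w.coeff 1, ?_⟩
    ext x
    rw [MonoidAlgebra.coeff_smul, Finsupp.smul_apply, sum_of_apply, smul_eq_mul, mul_one]
    obtain ⟨c, hc, hc1⟩ := hfull 1
    have := congrArg (fun f : MonoidAlgebra K G => f.coeff x) (h c hc x)
    simp only [schur_apply, mul_of_apply, mul_inv_cancel] at this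
    exact mul_left_cancel₀ hc1 this
  · rintro ⟨μ, rfl⟩ c hc g
    ext x
    simp only [schur_apply, mul_of_apply]
    rw [MonoidAlgebra.coeff_smul, Finsupp.smul_apply, Finsupp.smul_apply, sum_of_apply, sum_of_apply]
end

section
/- Let K be a field, G a finite group, and C a nonzero right ideal of KG such that C * C = C (Schur product). Then there exists a subgroup H \leq G such that C equals the right ideal generated by \sum_{h \in H} h, i.e., C is the induced module K_H^G realized in KG; consequently d(C) \cdot dim_K(C) = |G|. -/
open MonoidAlgebra

attribute [local instance] Classical.propDecidable

/-!
A Schur-closed subspace `C` of `KG` is stable under applying `t ↦ t * q(t)` to every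
coefficient, for any polynomial `q`; interpolating `q(t) = t⁻¹` on the nonzero values of
`c ∈ C` shows that `C` contains the indicator of the support of each of its elements. A minimal
such support through `x` is the class of `x` for the relation "no element of `C` separates the
two points", so the class indicators form a basis of `C`. If `C` is a nonzero right ideal, this
relation is invariant under right translation, hence its classes are the right cosets `H g` of
the subgroup `H` = class of `1`. Thus `C` is spanned by the `(∑_{h ∈ H} h) g`,
`dim C = [G : H]`, and the minimum weight is `|H|`.
-/

open Finset

section SchurClosed

variable {K α : Type*} [Field K]

lemma coeff_schur (f g : MonoidAlgebra K α) (x : α) :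
    (schur f g).coeff x = f.coeff x * g.coeff x :=
  Finsupp.zipWith_apply (hf := mul_zero 0) ..

def IsSchurClosed (C : Submodule K (MonoidAlgebra K α)) : Prop :=
  ∀ a ∈ C, ∀ b ∈ C, schur a b ∈ C

noncomputable def finsetIndicator (S : Finset α) : MonoidAlgebra K α :=
  ∑ x ∈ S, single x 1

lemma coeff_finsetIndicator (S : Finset α) (y : α) :
    (finsetIndicator S : MonoidAlgebra K α).coeff y = if y ∈ S then 1 else 0 := by
  simp [finsetIndicator, MonoidAlgebra.coeff_sum, Finsupp.single_apply]

lemma support_finsetIndicator (S : Finset α) :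
    (finsetIndicator S : MonoidAlgebra K α).coeff.support = S := by
  ext y
  simp [coeff_finsetIndicator]

section Polynomial

open Polynomial

noncomputable def mulEvalCoeff (q : K[X]) (c : MonoidAlgebra K α) : MonoidAlgebra K α :=
  ofCoeff (c.coeff.mapRange (fun t => t * q.eval t) (zero_mul _))

lemma coeff_mulEvalCoeff (q : K[X]) (c : MonoidAlgebra K α) (x : α) :
    (mulEvalCoeff q c).coeff x = c.coeff x * q.eval (c.coeff x) :=
  rfl

variable {C : Submodule K (MonoidAlgebra K α)}

lemma IsSchurClosed.mulEvalCoeff_mem (hC : IsSchurClosed C) {c : MonoidAlgebra K α}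
    (hc : c ∈ C) (q : K[X]) : mulEvalCoeff q c ∈ C := by
  induction q using Polynomial.induction_on with
  | C a =>
    convert C.smul_mem a hc using 1
    ext x
    simp [coeff_mulEvalCoeff, mul_comm]
  | add p q hp hq =>
    convert C.add_mem hp hq using 1
    ext x
    simp [coeff_mulEvalCoeff, mul_add]
  | monomial n a h =>
    convert hC c hc _ h using 1
    ext x
    simp only [coeff_mulEvalCoeff, coeff_schur, eval_mul, eval_C, eval_pow, eval_X]
    ring

lemma IsSchurClosed.finsetIndicator_support_mem (hC : IsSchurClosed C) {c : MonoidAlgebra K α}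
    (hc : c ∈ C) : finsetIndicator c.coeff.support ∈ C := by
  -- a polynomial `q` with `t * q(t) = 1` at every nonzero value `t` of `c`
  set q := Lagrange.interpolate (c.coeff.support.image c.coeff) id (fun t => t⁻¹)
  convert hC.mulEvalCoeff_mem hc q using 1
  ext x
  rw [coeff_finsetIndicator, coeff_mulEvalCoeff]
  by_cases hx : c.coeff x = 0
  · rw [if_neg (Finsupp.notMem_support_iff.mpr hx), hx, zero_mul]
  · rw [if_pos (Finsupp.mem_support_iff.mpr hx)]
    have := Lagrange.eval_interpolate_at_node (fun t => t⁻¹) (Set.injOn_id _)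
      (mem_image_of_mem c.coeff (Finsupp.mem_support_iff.mpr hx))
    rw [← mul_inv_cancel₀ hx]
    exact congrArg _ this.symm

end Polynomial

end SchurClosed

section Agreement

variable {K α : Type*} [Field K]

def agreeSetoid (C : Submodule K (MonoidAlgebra K α)) : Setoid α where
  r x y := ∀ c ∈ C, c.coeff x = c.coeff y
  iseqv := ⟨fun _ _ _ => rfl, fun h c hc => (h c hc).symm,
    fun h h' c hc => (h c hc).trans (h' c hc)⟩

lemma agree_coeff_eq {C : Submodule K (MonoidAlgebra K α)} {x y : α} (h : agreeSetoid C x y)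
    {c : MonoidAlgebra K α} (hc : c ∈ C) : c.coeff x = c.coeff y :=
  h c hc

variable [Fintype α] (C : Submodule K (MonoidAlgebra K α))

noncomputable def classIndicator (q : Quotient (agreeSetoid C)) : MonoidAlgebra K α :=
  finsetIndicator (univ.filter fun y => Quotient.mk _ y = q)

lemma coeff_classIndicator (q : Quotient (agreeSetoid C)) (y : α) :
    (classIndicator C q).coeff y = if Quotient.mk _ y = q then 1 else 0 := by
  simp [classIndicator, coeff_finsetIndicator]

variable {C}

lemma IsSchurClosed.classIndicator_mem (hC : IsSchurClosed C) {x : α}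
    (hx : ∃ c ∈ C, c.coeff x ≠ 0) : classIndicator C (Quotient.mk _ x) ∈ C := by
  obtain ⟨c₀, hc₀, hc₀x⟩ := hx
  obtain ⟨B, hB, hBmin⟩ := exists_min_image
    (univ.filter fun B : Finset α => x ∈ B ∧ finsetIndicator B ∈ C) card
    ⟨c₀.coeff.support, by simpa [hc₀x] using hC.finsetIndicator_support_mem hc₀⟩
  obtain ⟨hxB, hBC⟩ := (mem_filter.mp hB).2
  suffices hB : B = univ.filter fun y => Quotient.mk _ y = Quotient.mk (agreeSetoid C) x by
    rwa [classIndicator, ← hB]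
  ext y
  simp only [mem_filter, mem_univ, true_and, Quotient.eq]
  constructor
  · intro hyB c hc
    by_contra hne
    -- cutting `B` down to where `c` differs from `c y` keeps `x` but loses `y`
    set d := schur (finsetIndicator B) c - c.coeff y • finsetIndicator B
    have hd : ∀ z, d.coeff z = (if z ∈ B then 1 else 0) * (c.coeff z - c.coeff y) := by
      intro z
      simp only [d, coeff_sub, coeff_smul, Finsupp.coe_sub, Finsupp.coe_smul, Pi.sub_apply,
        Pi.smul_apply, coeff_schur, coeff_finsetIndicator, smul_eq_mul]
      ring
    have hdB : d.coeff.support ⊆ B.erase y := by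
      intro z hz
      rw [Finsupp.mem_support_iff, hd] at hz
      have hzB : z ∈ B := by
        by_contra h
        simp [h] at hz
      exact mem_erase.mpr ⟨by rintro rfl; simp at hz, hzB⟩
    have hxd : x ∈ d.coeff.support := by
      rw [Finsupp.mem_support_iff, hd, if_pos hxB, one_mul, sub_ne_zero]
      exact Ne.symm hne
    have hdC : finsetIndicator d.coeff.support ∈ C :=
      hC.finsetIndicator_support_mem (C.sub_mem (hC _ hBC _ hc) (C.smul_mem _ hBC))
    exact (hBmin _ (mem_filter.mpr ⟨mem_univ _, hxd, hdC⟩)).not_gt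
      ((card_le_card hdB).trans_lt (card_erase_lt_of_mem hyB))
  · intro hy
    have hyx := hy _ hBC
    simp only [coeff_finsetIndicator, if_pos hxB] at hyx
    by_contra hyB
    simp [hyB] at hyx

lemma mem_span_classIndicator {c : MonoidAlgebra K α} (hc : c ∈ C) :
    c ∈ Submodule.span K (Set.range (classIndicator C)) := by
  have hc_eq : c = ∑ q, Quotient.lift c.coeff (fun _ _ h => agree_coeff_eq h hc) q •
      classIndicator C q := by
    ext y
    simp [coeff_classIndicator, MonoidAlgebra.coeff_sum]
  rw [hc_eq]
  exact Submodule.sum_mem _ fun q _ => Submodule.smul_mem _ _ (Submodule.subset_span ⟨q, rfl⟩)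

lemma linearIndependent_classIndicator : LinearIndependent K (classIndicator C) := by
  let evalAtReps : MonoidAlgebra K α →ₗ[K] Quotient (agreeSetoid C) → K :=
    LinearMap.pi fun q => Finsupp.lapply q.out ∘ₗ (coeffLinearEquiv K).toLinearMap
  refine LinearIndependent.of_comp evalAtReps ?_
  convert Pi.linearIndependent_single_one (Quotient (agreeSetoid C)) K
  ext q'
  simp [evalAtReps, coeff_classIndicator, Pi.single_apply]

lemma IsSchurClosed.span_classIndicator (hC : IsSchurClosed C)
    (hcover : ∀ x, ∃ c ∈ C, c.coeff x ≠ 0) :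
    Submodule.span K (Set.range (classIndicator C)) = C := by
  refine le_antisymm (Submodule.span_le.mpr ?_) fun c hc => mem_span_classIndicator hc
  rintro _ ⟨q, rfl⟩
  induction q using Quotient.inductionOn with
  | h x => exact hC.classIndicator_mem (hcover x)

lemma IsSchurClosed.finrank_eq_card_quotient (hC : IsSchurClosed C)
    (hcover : ∀ x, ∃ c ∈ C, c.coeff x ≠ 0) :
    Module.finrank K C = Nat.card (Quotient (agreeSetoid C)) := by
  have h := finrank_span_eq_card (linearIndependent_classIndicator (C := C))
  rwa [hC.span_classIndicator hcover, ← Nat.card_eq_fintype_card] at h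

lemma support_classIndicator_subset {c : MonoidAlgebra K α} (hc : c ∈ C) {x : α}
    (hx : c.coeff x ≠ 0) :
    (classIndicator C (Quotient.mk _ x)).coeff.support ⊆ c.coeff.support := by
  intro y hy
  rw [classIndicator, support_finsetIndicator, mem_filter, Quotient.eq] at hy
  rw [Finsupp.mem_support_iff, agree_coeff_eq hy.2 hc]
  exact hx

end Agreement

section RightIdeal

variable {K G : Type*} [Field K] [Group G] {C : Submodule K (MonoidAlgebra K G)}

lemma IsRightIdeal.exists_coeff_ne_zero (hI : IsRightIdeal C) (hC : C ≠ ⊥) (x : G) :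
    ∃ c ∈ C, c.coeff x ≠ 0 := by
  obtain ⟨c, hc, hc0⟩ := Submodule.exists_mem_ne_zero_of_ne_bot hC
  obtain ⟨y, hy⟩ := Finsupp.support_nonempty_iff.mpr (coeff_eq_zero.not.mpr hc0)
  refine ⟨c * single (y⁻¹ * x) 1, hI c hc _, ?_⟩
  simpa [coeff_mul_single_apply] using hy

lemma IsRightIdeal.agree_mul_right (hI : IsRightIdeal C) {x y : G} (h : agreeSetoid C x y)
    (g : G) : agreeSetoid C (x * g) (y * g) := fun c hc => by
  simpa [coeff_mul_single_apply] using agree_coeff_eq h (hI c hc (single g⁻¹ 1))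

def agreeSubgroup (hI : IsRightIdeal C) : Subgroup G where
  carrier := {g | agreeSetoid C g 1}
  one_mem' := (agreeSetoid C).refl 1
  mul_mem' {a b} ha hb := (agreeSetoid C).trans (by simpa using hI.agree_mul_right ha b) hb
  inv_mem' {a} ha := (agreeSetoid C).symm (by simpa using hI.agree_mul_right ha a⁻¹)

lemma agree_iff_mul_inv_mem (hI : IsRightIdeal C) {x y : G} :
    agreeSetoid C x y ↔ x * y⁻¹ ∈ agreeSubgroup hI := by
  refine ⟨fun h => ?_, fun h => by simpa using hI.agree_mul_right h y⟩
  show agreeSetoid C _ 1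
  simpa using hI.agree_mul_right h y⁻¹

lemma card_quotient_agreeSetoid (hI : IsRightIdeal C) :
    Nat.card (Quotient (agreeSetoid C)) = (agreeSubgroup hI).index :=
  Nat.card_congr <| (Quotient.congrRight fun x y => by
      rw [QuotientGroup.rightRel_apply, ← agree_iff_mul_inv_mem hI]
      exact ⟨(agreeSetoid C).symm, (agreeSetoid C).symm⟩).trans
    (QuotientGroup.quotientRightRelEquivQuotientLeftRel _)

variable [Fintype G]

lemma sum_of_agreeSubgroup (hI : IsRightIdeal C) :
    ∑ h : agreeSubgroup hI, of K G h = classIndicator C (Quotient.mk _ 1) := by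
  rw [classIndicator, finsetIndicator]
  refine (Finset.sum_subtype _ (fun y => ?_) _).symm
  simp [Quotient.eq, agree_iff_mul_inv_mem hI]

lemma classIndicator_one_mul_single (hI : IsRightIdeal C) (g : G) :
    classIndicator C (Quotient.mk _ 1) * single g 1 = classIndicator C (Quotient.mk _ g) := by
  ext y
  simp [coeff_classIndicator, Quotient.eq, agree_iff_mul_inv_mem hI]

lemma card_support_classIndicator (hI : IsRightIdeal C) (x : G) :
    (classIndicator C (Quotient.mk _ x)).coeff.support.card = Nat.card (agreeSubgroup hI) := by
  rw [← classIndicator_one_mul_single hI, support_coeff_mul_single _ _ (by simp), card_map,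
    classIndicator, support_finsetIndicator, Nat.card_eq_fintype_card, Fintype.card_subtype]
  simp [Quotient.eq, agree_iff_mul_inv_mem hI]

lemma IsRightIdeal.range_mulLeft_classIndicator (hI : IsRightIdeal C) (hs : IsSchurClosed C)
    (hcover : ∀ x, ∃ c ∈ C, c.coeff x ≠ 0) :
    LinearMap.range (LinearMap.mulLeft K (classIndicator C (Quotient.mk _ 1))) = C := by
  refine le_antisymm ?_ ?_
  · rintro _ ⟨v, rfl⟩
    exact hI _ (hs.classIndicator_mem (hcover 1)) v
  · refine (hs.span_classIndicator hcover).ge.trans (Submodule.span_le.mpr ?_)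
    rintro _ ⟨q, rfl⟩
    induction q using Quotient.inductionOn with
    | h g => exact ⟨single g 1, classIndicator_one_mul_single hI g⟩

lemma IsRightIdeal.isLeast_card_support (hI : IsRightIdeal C) (hs : IsSchurClosed C)
    (hcover : ∀ x, ∃ c ∈ C, c.coeff x ≠ 0) :
    IsLeast {w | ∃ c ∈ C, c ≠ 0 ∧ c.coeff.support.card = w}
      (Nat.card (agreeSubgroup hI)) := by
  refine ⟨⟨_, hs.classIndicator_mem (hcover 1), fun h => ?_,
    card_support_classIndicator hI 1⟩, ?_⟩
  · simpa [h] using coeff_classIndicator C (Quotient.mk _ 1) 1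
  · rintro _ ⟨c, hc, hc0, rfl⟩
    obtain ⟨x, hx⟩ := Finsupp.support_nonempty_iff.mpr (coeff_eq_zero.not.mpr hc0)
    rw [← card_support_classIndicator hI x]
    exact card_le_card (support_classIndicator_subset hc (Finsupp.mem_support_iff.mp hx))

end RightIdeal

/-- If a nonzero right ideal `C` satisfies `C * C = C` (Schur product), then
`C = (∑_{h ∈ H} h)·KG` for some subgroup `H ≤ G`; consequently `d(C) · dim C = |G|`. -/
theorem stmt13 {K G : Type*} [Field K] [Group G] [Fintype G]
    (C : Submodule K (MonoidAlgebra K G)) (hI : IsRightIdeal C) (hC : C ≠ ⊥)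
    (heq : Submodule.span K
      {x : MonoidAlgebra K G | ∃ a ∈ C, ∃ b ∈ C, x = schur a b} = C) :
    ∃ H : Subgroup G,
      C = LinearMap.range
        (LinearMap.mulLeft K (∑ h : H, MonoidAlgebra.of K G (h : G))) ∧
      ∀ d : ℕ, IsLeast {w | ∃ c ∈ C, c ≠ 0 ∧ c.coeff.support.card = w} d →
        d * Module.finrank K ↥C = Fintype.card G := by
  have hs : IsSchurClosed C := fun a ha b hb =>
    heq ▸ Submodule.subset_span ⟨a, ha, b, hb, rfl⟩
  have hcover := hI.exists_coeff_ne_zero hC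
  refine ⟨agreeSubgroup hI, ?_, fun d hd => ?_⟩
  · rw [sum_of_agreeSubgroup hI, hI.range_mulLeft_classIndicator hs hcover]
  · rw [hd.unique (hI.isLeast_card_support hs hcover), hs.finrank_eq_card_quotient hcover,
      card_quotient_agreeSetoid hI, Subgroup.card_mul_index, Nat.card_eq_fintype_card]
end

section
/- Let K be a field of characteristic p > 0, G a finite group, and C a right ideal of KG that is not self-orthogonal (C \not\subseteq C^\perp). Then the Schur product C * C has a direct summand (as KG-module) isomorphic to the projective cover P_0 of the trivial KG-module; in particular, the largest power of p dividing |G| is at most dim_K(C * C). -/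
open MonoidAlgebra

attribute [local instance] Classical.propDecidable

/-!
The augmentation of `schur c c'` is `∑ g, c g * c' g ≠ 0`, so the right ideal `S = C * C`
contains an element of augmentation one, hence (Fitting's lemma for left multiplication) an
idempotent `f` of augmentation one; take one with `f KG` minimal. Then `f KG` is a direct summand
of `KG` and of `S`, so projective, and `w ↦ (∑ g, g) * w = ε(w) • ∑ g, g` maps it onto the
trivial module with superfluous kernel: a submodule supplementing the kernel contains an element,
hence an idempotent, of augmentation one, so by minimality it is everything.

For the bound, let `H` be a Sylow `p`-subgroup. If `f * b = 0` for some `0 ≠ b ∈ KH`, the right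
ideal `b KH` contains a nonzero `H`-fixed vector (a `p`-group acting on a finite `𝔽_p`-space),
i.e. a multiple of `∑ h, h`; but `f * ∑ h, h = 0` says that all coset sums of `f` vanish,
so `ε(f) = 0`. Hence `b ↦ f * b` embeds `KH` into `S`.
-/

open MulOpposite MulAction

section RightIdeal

variable {R : Type*} [Ring R]

lemma mem_span_op_singleton {f z : R} :
    z ∈ Submodule.span Rᵐᵒᵖ {f} ↔ ∃ a, f * a = z := by
  rw [Submodule.mem_span_singleton]
  exact ⟨fun ⟨r, hr⟩ => ⟨unop r, hr⟩, fun ⟨a, ha⟩ => ⟨op a, ha⟩⟩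

lemma IsIdempotentElem.projective_span_op_singleton {f : R} (hf : IsIdempotentElem f) :
    Module.Projective Rᵐᵒᵖ (Submodule.span Rᵐᵒᵖ {f}) := by
  let i : Submodule.span Rᵐᵒᵖ {f} →ₗ[Rᵐᵒᵖ] Rᵐᵒᵖ :=
    { toFun := fun w => op w.1, map_add' := fun _ _ => rfl, map_smul' := fun _ _ => rfl }
  refine Module.Projective.of_split i
    ((LinearMap.toSpanSingleton Rᵐᵒᵖ R f).codRestrict _ fun r =>
      Submodule.smul_mem _ r (Submodule.mem_span_singleton_self f)) ?_
  ext ⟨w, hw⟩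
  obtain ⟨a, rfl⟩ := mem_span_op_singleton.1 hw
  change f * (f * a) = f * a
  rw [← mul_assoc, hf.eq]

lemma IsIdempotentElem.exists_isCompl_span_op_singleton {f : R} (hf : IsIdempotentElem f)
    {S : Submodule Rᵐᵒᵖ R} (hfS : f ∈ S) :
    ∃ M : Submodule Rᵐᵒᵖ R,
      Submodule.span Rᵐᵒᵖ {f} ⊓ M = ⊥ ∧ Submodule.span Rᵐᵒᵖ {f} ⊔ M = S := by
  let E := DistribSMul.toLinearMap Rᵐᵒᵖ R f
  have hE : IsIdempotentElem E := LinearMap.ext fun a => by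
    change f * (f * a) = f * a
    rw [← mul_assoc, hf.eq]
  have hrange : LinearMap.range E = Submodule.span Rᵐᵒᵖ {f} := by
    ext z
    exact mem_span_op_singleton.symm
  have hle : Submodule.span Rᵐᵒᵖ {f} ≤ S := (Submodule.span_singleton_le_iff_mem _ _).2 hfS
  have hc := LinearMap.IsIdempotentElem.isCompl hE
  rw [hrange] at hc
  refine ⟨LinearMap.ker E ⊓ S, ?_, ?_⟩
  · exact disjoint_iff.1 (hc.disjoint.mono_right inf_le_left)
  · rw [← sup_inf_assoc_of_le _ hle, hc.sup_eq_top, top_inf_eq]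

end RightIdeal

/-- Fitting: `A = ker xⁿ ⊕ xⁿA` for large `n`, so `1 = y + e` with `xⁿ y = 0` and `e ∈ xⁿA`;
then `e` is idempotent, and `φ y = φ (xⁿ y) = 0`. -/
theorem exists_isIdempotentElem_mul_of_map_eq_one {K A B F : Type*} [Field K] [Ring A]
    [Algebra K A] [FiniteDimensional K A] [Semiring B] [FunLike F A B] [RingHomClass F A B]
    (φ : F) {x : A} (hx : φ x = 1) :
    ∃ a, IsIdempotentElem (x * a) ∧ φ (x * a) = 1 := by
  obtain ⟨N, hN⟩ := Filter.eventually_atTop.1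
    (LinearMap.eventually_isCompl_ker_pow_range_pow (LinearMap.mulLeft K x))
  have hcompl := hN (N + 1) N.le_succ
  rw [LinearMap.pow_mulLeft] at hcompl
  obtain ⟨y, hy, e, ⟨c, rfl⟩, hye⟩ :=
    Submodule.mem_sup.1 (hcompl.codisjoint.eq_top ▸ Submodule.mem_top (x := (1 : A)))
  simp only [LinearMap.mem_ker, LinearMap.mulLeft_apply] at hy
  simp only [LinearMap.mulLeft_apply] at hye
  refine ⟨x ^ N * c, ?_, ?_⟩ <;> rw [← mul_assoc, ← pow_succ']
  · have hye' :
        y * (x ^ (N + 1) * c) = x ^ (N + 1) * c - x ^ (N + 1) * c * (x ^ (N + 1) * c) := by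
      rw [← one_sub_mul, ← hye, add_sub_cancel_right]
    have h := Submodule.disjoint_def.1 hcompl.disjoint (y * (x ^ (N + 1) * c))
      (by simp [← mul_assoc, hy])
      ⟨c - c * (x ^ (N + 1) * c), by simp [hye', mul_sub, mul_assoc]⟩
    rw [hye', sub_eq_zero] at h
    exact h.symm
  · have hφy : φ y = 0 := by simpa [hx] using congrArg φ hy
    simpa [hφy] using congrArg φ hye

theorem exists_isIdempotentElem_span_minimal {K A B F : Type*} [Field K] [Ring A]
    [Algebra K A] [FiniteDimensional K A] [Semiring B] [FunLike F A B] [RingHomClass F A B]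
    (φ : F) {S : Submodule Aᵐᵒᵖ A} {x : A} (hxS : x ∈ S) (hx : φ x = 1) :
    ∃ f ∈ S, IsIdempotentElem f ∧ φ f = 1 ∧ ∀ N ≤ Submodule.span Aᵐᵒᵖ {f},
      (∃ n ∈ N, φ n = 1) → N = Submodule.span Aᵐᵒᵖ {f} := by
  have : IsArtinian Aᵐᵒᵖ A := isArtinian_of_tower K inferInstance
  have hidem {N : Submodule Aᵐᵒᵖ A} {n : A} (hn : n ∈ N) (hφn : φ n = 1) :
      ∃ e ∈ N, IsIdempotentElem e ∧ φ e = 1 := by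
    obtain ⟨a, ha, hφa⟩ := exists_isIdempotentElem_mul_of_map_eq_one (K := K) φ hφn
    exact ⟨n * a, N.smul_mem (op a) hn, ha, hφa⟩
  obtain ⟨_, ⟨f, ⟨hfS, hf, hφf⟩, rfl⟩, hmin⟩ := IsArtinian.set_has_minimal
    ((fun e => Submodule.span Aᵐᵒᵖ {e}) '' {e | e ∈ S ∧ IsIdempotentElem e ∧ φ e = 1})
    (let ⟨e, he⟩ := hidem hxS hx; ⟨_, e, he, rfl⟩)
  refine ⟨f, hfS, hf, hφf, fun N hN ⟨n, hn, hφn⟩ => ?_⟩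
  obtain ⟨e, heN, he, hφe⟩ := hidem hn hφn
  have heN' : Submodule.span Aᵐᵒᵖ {e} ≤ N := (Submodule.span_singleton_le_iff_mem _ _).2 heN
  have heS : e ∈ S := (Submodule.span_singleton_le_iff_mem _ _).2 hfS (hN heN)
  have hef := eq_of_le_of_not_lt (heN'.trans hN) (hmin _ ⟨e, ⟨heS, he, hφe⟩, rfl⟩)
  exact le_antisymm hN (hef.ge.trans heN')

theorem IsPGroup.exists_fixed_ne_zero_mem_span_orbit {p : ℕ} [Fact p.Prime] {H V : Type*}
    [Group H] [Finite H] [AddCommGroup V] [Module (ZMod p) V] [DistribMulAction H V]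
    (hH : IsPGroup p H) {v : V} (hv : v ≠ 0) :
    ∃ w ∈ Submodule.span (ZMod p) (orbit H v), w ≠ 0 ∧ ∀ h : H, h • w = w := by
  set W := Submodule.span (ZMod p) (orbit H v)
  have hstable (h : H) {w : V} (hw : w ∈ W) : h • w ∈ W := by
    have : W.map ((DistribSMul.toAddMonoidHom V h).toZModLinearMap p) ≤ W := by
      rw [Submodule.map_span_le]
      rintro _ ⟨g, rfl⟩
      exact Submodule.subset_span ⟨h * g, mul_smul h g v⟩
    exact this ⟨w, hw, rfl⟩
  let W' : SubMulAction H V := ⟨W, fun h _ hw => hstable h hw⟩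
  have : Module.Finite (ZMod p) W := FiniteDimensional.span_of_finite _ (Set.finite_range _)
  have : Finite W := Module.finite_of_finite (ZMod p)
  have : Finite W' := ‹Finite W›
  have hcard : p ∣ Nat.card W' := by
    have : Nontrivial W :=
      ⟨⟨⟨v, Submodule.subset_span (mem_orbit_self v)⟩, 0, by simpa [Subtype.ext_iff] using hv⟩⟩
    have : Fintype W := Fintype.ofFinite _
    change p ∣ Nat.card W
    rw [Nat.card_eq_fintype_card, Module.card_eq_pow_finrank (K := ZMod p), ZMod.card]
    exact dvd_pow_self p Module.finrank_pos.ne'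
  obtain ⟨w, hw, hne⟩ := hH.exists_fixed_point_of_prime_dvd_card_of_fixed_point W' hcard
    (a := ⟨0, W.zero_mem⟩) fun h => Subtype.ext (smul_zero h)
  exact ⟨w, w.2, fun h => hne (Subtype.ext h.symm), fun h => congrArg Subtype.val (hw h)⟩

lemma Subgroup.bijective_out_mul {G : Type*} [Group G] (H : Subgroup G) :
    Function.Bijective fun qh : (G ⧸ H) × H => qh.1.out * qh.2 := by
  refine ⟨fun ⟨q, h⟩ ⟨q', h'⟩ heq => ?_, fun g => ?_⟩
  · have hq : q = q' := by
      simpa [QuotientGroup.mk_mul_of_mem _ h.2, QuotientGroup.mk_mul_of_mem _ h'.2] using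
        congrArg (QuotientGroup.mk (s := H)) heq
    subst hq
    simpa using heq
  · obtain ⟨h, hh⟩ := QuotientGroup.mk_out_eq_mul H g
    exact ⟨(g, h⁻¹), by simp [hh]⟩

namespace MonoidAlgebra

variable {K G : Type*} [Field K] [Group G] [Fintype G]

noncomputable def augmentation (K G : Type*) [Field K] [Group G] : MonoidAlgebra K G →ₐ[K] K :=
  lift K K G 1

lemma augmentation_apply (a : MonoidAlgebra K G) : augmentation K G a = ∑ g, a.coeff g := by
  rw [augmentation, lift_apply, Finsupp.sum_fintype] <;> simp

lemma coeff_sum_of (g : G) : (∑ g : G, of K G g).coeff g = 1 := by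
  simp [coeff_sum, of_apply, Finsupp.single_apply]

lemma sum_of_mul (a : MonoidAlgebra K G) :
    (∑ g : G, of K G g) * a = augmentation K G a • ∑ g : G, of K G g := by
  ext g
  rw [coeff_smul_apply, coeff_sum_of, smul_eq_mul, mul_one, augmentation_apply]
  simp only [Finset.sum_mul, coeff_sum, Finsupp.finsetSum_apply, of_apply, coeff_single_mul_apply,
    one_mul]
  exact Equiv.sum_comp ((Equiv.inv G).trans (Equiv.mulRight g)) a.coeff

lemma eq_coeff_one_smul_sum_of {w : MonoidAlgebra K G} (hw : ∀ g, w * of K G g = w) :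
    w = w.coeff 1 • ∑ g : G, of K G g := by
  ext g
  rw [coeff_smul_apply, coeff_sum_of, smul_eq_mul, mul_one]
  calc w.coeff g = (w * of K G g).coeff g := by rw [hw]
    _ = w.coeff 1 := by rw [of_apply, coeff_mul_single_apply, mul_inv_cancel, mul_one]

lemma augmentation_eq_zero_of_mul_sum_of_eq_zero (H : Subgroup G) {x : MonoidAlgebra K G}
    (hx : x * ∑ h : H, of K G h = 0) : augmentation K G x = 0 := by
  have hcoset (g : G) : ∑ h : H, x.coeff (g * h) = 0 := by
    have := congrArg (fun y => y.coeff g) hx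
    simp only [Finset.mul_sum, coeff_sum, Finsupp.finsetSum_apply, of_apply,
      coeff_mul_single_apply, mul_one, coeff_zero, Finsupp.coe_zero, Pi.zero_apply] at this
    rw [← this, ← Equiv.sum_comp (Equiv.inv H)]
    simp
  rw [augmentation_apply, ← (H.bijective_out_mul).sum_comp, Fintype.sum_prod_type]
  exact Finset.sum_eq_zero fun q _ => hcoset q.out

theorem exists_mul_eq_sum_of (p : ℕ) [Fact p.Prime] [CharP K p] (hG : IsPGroup p G)
    {b : MonoidAlgebra K G} (hb : b ≠ 0) : ∃ a, b * a = ∑ g : G, of K G g := by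
  let : Module (ZMod p) (MonoidAlgebra K G) := AddCommGroup.zmodModule fun x => by
    rw [← Nat.cast_smul_eq_nsmul K, CharP.cast_eq_zero, zero_smul]
  -- `g • a = a * g⁻¹`
  let : DistribMulAction G (MonoidAlgebra K G) := DistribMulAction.compHom _
    ((MonoidHom.op (of K G)).comp (MulEquiv.inv' G).toMonoidHom)
  obtain ⟨w, hw, hw0, hfix⟩ := hG.exists_fixed_ne_zero_mem_span_orbit hb
  obtain ⟨c, hc, hw_eq⟩ : ∃ c : K, c ≠ 0 ∧ w = c • ∑ g : G, of K G g := by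
    have hw_eq := eq_coeff_one_smul_sum_of fun g => by
      simpa using (show w * of K G g⁻¹⁻¹ = w from hfix g⁻¹)
    exact ⟨w.coeff 1, fun hc => hw0 (by rw [hw_eq, hc, zero_smul]), hw_eq⟩
  obtain ⟨a, ha⟩ : ∃ a, b * a = w := by
    have : Submodule.span (ZMod p) (orbit G b) ≤
        LinearMap.range ((AddMonoidHom.mulLeft b).toZModLinearMap p) := by
      rw [Submodule.span_le]
      rintro _ ⟨g, rfl⟩
      exact ⟨of K G g⁻¹, rfl⟩
    exact this hw
  refine ⟨c⁻¹ • a, ?_⟩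
  rw [mul_smul_comm, ha, hw_eq, smul_smul, inv_mul_cancel₀ hc, one_smul]

theorem exists_projectiveCover_span_sum_of {f : MonoidAlgebra K G} (hεf : augmentation K G f = 1)
    (hmin : ∀ N ≤ Submodule.span (MonoidAlgebra K G)ᵐᵒᵖ {f},
      (∃ n ∈ N, augmentation K G n = 1) → N = Submodule.span (MonoidAlgebra K G)ᵐᵒᵖ {f}) :
    ∃ F : Submodule.span (MonoidAlgebra K G)ᵐᵒᵖ {f} →ₗ[(MonoidAlgebra K G)ᵐᵒᵖ]
        Submodule.span (MonoidAlgebra K G)ᵐᵒᵖ {∑ g : G, of K G g},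
      Function.Surjective F ∧
        ∀ N : Submodule (MonoidAlgebra K G)ᵐᵒᵖ (Submodule.span (MonoidAlgebra K G)ᵐᵒᵖ {f}),
          N ⊔ LinearMap.ker F = ⊤ → N = ⊤ := by
  have ht : ∑ g : G, of K G g ≠ 0 := fun ht => by
    have h := coeff_sum_of (K := K) (1 : G)
    rw [ht, coeff_zero] at h
    exact zero_ne_one h
  set P := Submodule.span (MonoidAlgebra K G)ᵐᵒᵖ {f}
  set t := ∑ g : G, of K G g
  let F : P →ₗ[(MonoidAlgebra K G)ᵐᵒᵖ] Submodule.span (MonoidAlgebra K G)ᵐᵒᵖ {t} :=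
    ((DistribSMul.toLinearMap _ _ t).comp P.subtype).codRestrict _
      fun w => mem_span_op_singleton.2 ⟨w, rfl⟩
  have hF (w : P) : (F w : MonoidAlgebra K G) = augmentation K G w • t := sum_of_mul _
  refine ⟨F, ?_, fun N hN => ?_⟩
  · rintro ⟨y, hy⟩
    obtain ⟨a, rfl⟩ := mem_span_op_singleton.1 hy
    refine ⟨⟨f * a, mem_span_op_singleton.2 ⟨a, rfl⟩⟩, Subtype.ext ?_⟩
    change t * (f * a) = t * a
    rw [← mul_assoc, sum_of_mul, hεf, one_smul]
  obtain ⟨n, hn, k, hk, hnk⟩ := Submodule.mem_sup.1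
    (hN ▸ Submodule.mem_top :
      (⟨f, Submodule.mem_span_singleton_self f⟩ : P) ∈ N ⊔ LinearMap.ker F)
  have hεk : augmentation K G k = 0 := by
    have := congrArg Subtype.val (LinearMap.mem_ker.1 hk)
    rw [hF] at this
    exact (smul_eq_zero.1 this).resolve_right ht
  have hεn : augmentation K G n = 1 := by
    simpa [hεk, hεf] using congrArg (augmentation K G ∘ Subtype.val) hnk
  have hNP := hmin (N.map P.subtype) (Submodule.map_subtype_le _ _) ⟨n, ⟨n, hn, rfl⟩, hεn⟩
  refine eq_top_iff.2 fun w _ => ?_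
  obtain ⟨n', hn', hn'w⟩ := hNP.ge w.2
  rwa [← Subtype.ext hn'w]

theorem injective_mulLeft_comp_mapDomain_subtype (p : ℕ) [Fact p.Prime] [CharP K p]
    {H : Subgroup G} (hH : IsPGroup p H) {f : MonoidAlgebra K G} (hf : augmentation K G f ≠ 0) :
    Function.Injective
      ((LinearMap.mulLeft K f).comp (mapDomainAlgHom K K H.subtype).toLinearMap) := by
  refine (injective_iff_map_eq_zero _).2 fun b hb => by_contra fun hb0 => hf ?_
  obtain ⟨a, ha⟩ := exists_mul_eq_sum_of p hH hb0
  apply augmentation_eq_zero_of_mul_sum_of_eq_zero H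
  have hsum : mapDomainAlgHom K K H.subtype (∑ h : H, of K H h) = ∑ h : H, of K G h := by
    simp only [map_sum, of_apply, mapDomainAlgHom_apply, Subgroup.coe_subtype, mapDomain_single]
  rw [← hsum, ← ha, map_mul, ← mul_assoc]
  exact (congrArg (· * _) hb).trans (zero_mul _)

theorem card_le_finrank_of_augmentation_ne_zero (p : ℕ) [Fact p.Prime] [CharP K p]
    {H : Subgroup G} (hH : IsPGroup p H) {S : Submodule (MonoidAlgebra K G)ᵐᵒᵖ (MonoidAlgebra K G)}
    {f : MonoidAlgebra K G} (hfS : f ∈ S) (hf : augmentation K G f ≠ 0) :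
    Nat.card H ≤ Set.finrank K (S : Set (MonoidAlgebra K G)) := by
  rw [Nat.card_eq_fintype_card, ← Module.finrank_eq_card_basis (basis H K),
    ← LinearMap.finrank_range_of_inj (injective_mulLeft_comp_mapDomain_subtype p hH hf)]
  refine Submodule.finrank_mono ?_
  rintro _ ⟨b, rfl⟩
  exact Submodule.subset_span (S.smul_mem (op _) hfS)

lemma augmentation_schur (a b : MonoidAlgebra K G) :
    augmentation K G (schur a b) = ∑ g, a.coeff g * b.coeff g :=
  augmentation_apply _

end MonoidAlgebra

/-- In characteristic `p`, if the right ideal `C` is not self-orthogonal, then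
`C * C = P ⊕ M` where `P` is a projective cover of the trivial `KG`-module
(the right ideal `K · ∑_g g`); in particular `|G|_p ≤ dim_K (C * C)`. -/
theorem stmt16 {K G : Type*} [Field K] [Group G] [Fintype G]
    (p : ℕ) [Fact p.Prime] [CharP K p]
    (C : Submodule (MonoidAlgebra K G)ᵐᵒᵖ (MonoidAlgebra K G))
    (hno : ∃ c ∈ C, ∃ c' ∈ C, ∑ g : G, c.coeff g * c'.coeff g ≠ 0) :
    ∃ P M : Submodule (MonoidAlgebra K G)ᵐᵒᵖ (MonoidAlgebra K G),
      P ⊓ M = ⊥ ∧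
      P ⊔ M = Submodule.span (MonoidAlgebra K G)ᵐᵒᵖ
        {x : MonoidAlgebra K G | ∃ a ∈ C, ∃ b ∈ C, x = schur a b} ∧
      Module.Projective (MonoidAlgebra K G)ᵐᵒᵖ ↥P ∧
      (∃ f : ↥P →ₗ[(MonoidAlgebra K G)ᵐᵒᵖ]
          ↥(Submodule.span (MonoidAlgebra K G)ᵐᵒᵖ
            {∑ g : G, MonoidAlgebra.of K G g}),
        Function.Surjective f ∧
        ∀ N : Submodule (MonoidAlgebra K G)ᵐᵒᵖ ↥P,
          N ⊔ LinearMap.ker f = ⊤ → N = ⊤) ∧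
      p ^ (Fintype.card G).factorization p ≤
        Set.finrank K ((Submodule.span (MonoidAlgebra K G)ᵐᵒᵖ
          {x : MonoidAlgebra K G | ∃ a ∈ C, ∃ b ∈ C, x = schur a b} :
            Submodule (MonoidAlgebra K G)ᵐᵒᵖ (MonoidAlgebra K G)) :
          Set (MonoidAlgebra K G)) := by
  set S := Submodule.span (MonoidAlgebra K G)ᵐᵒᵖ
    {x : MonoidAlgebra K G | ∃ a ∈ C, ∃ b ∈ C, x = schur a b}
  obtain ⟨c, hc, c', hc', hsum⟩ := hno
  have hxS : (∑ g : G, c.coeff g * c'.coeff g)⁻¹ • schur c c' ∈ S :=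
    S.smul_of_tower_mem _ (Submodule.subset_span ⟨c, hc, c', hc', rfl⟩)
  have hεx : augmentation K G ((∑ g : G, c.coeff g * c'.coeff g)⁻¹ • schur c c') = 1 := by
    rw [map_smul, augmentation_schur, smul_eq_mul, inv_mul_cancel₀ hsum]
  obtain ⟨f, hfS, hf, hεf, hmin⟩ :=
    exists_isIdempotentElem_span_minimal (K := K) (augmentation K G) hxS hεx
  obtain ⟨M, hPM, hPMS⟩ := hf.exists_isCompl_span_op_singleton hfS
  obtain ⟨Syl⟩ : Nonempty (Sylow p G) := inferInstance
  refine ⟨_, M, hPM, hPMS, hf.projective_span_op_singleton,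
    exists_projectiveCover_span_sum_of hεf hmin, ?_⟩
  rw [← Nat.card_eq_fintype_card, ← Sylow.card_eq_multiplicity Syl]
  exact card_le_finrank_of_augmentation_ne_zero p Syl.isPGroup' hfS (hεf ▸ one_ne_zero)
end

section
/- Let p be a prime, K a field of characteristic p, G a finite p-group, and C a right ideal of KG that is not self-orthogonal. Then C * C = KG, where * denotes the Schur product of ideals. -/
/-!
Right multiplication by a group element permutes coefficients, so it commutes with the Schur
product and the span of `C * C` is again a right ideal. It contains `u = schur c c'` with
`ε(u) ≠ 0`, and such a `u` is a unit of `KG`: otherwise `{x | x u = 0}` is a nonzero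
representation of the `p`-group `G` in characteristic `p`, so it contains a nonzero invariant
`λ ∑ g`, but `(λ ∑ g) u = λ ε(u) ∑ g ≠ 0`.
-/

open MonoidAlgebra

attribute [local instance] Classical.propDecidable

theorem Representation.invariants_ne_bot_of_isPGroup {p : ℕ} [Fact p.Prime] {K G V : Type*}
    [CommRing K] [CharP K p] [Group G] [Finite G] [AddCommGroup V] [Module K V] [Nontrivial V]
    (hG : IsPGroup p G) (ρ : Representation K G V) : ρ.invariants ≠ ⊥ := by
  obtain ⟨v, hv⟩ := exists_ne (0 : V)
  -- The additive subgroup generated by an orbit is a finite `G`-set of `p`-power order fixing `0`.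
  let A := AddSubgroup.closure (Set.range (ρ · v))
  have hpA (x : A) : p • x = 0 := by
    ext; simp [← Nat.cast_smul_eq_nsmul K]
  have : Finite A := AddCommGroup.finite_of_fg_isAddTorsion A fun x =>
    isOfFinAddOrder_iff_nsmul_eq_zero.2 ⟨p, (Fact.out : p.Prime).pos, hpA x⟩
  have hcard : p ∣ Nat.card A := by
    have hvA : v ∈ A := AddSubgroup.subset_closure ⟨1, by simp⟩
    rw [← addOrderOf_eq_prime (hpA ⟨v, hvA⟩) (by simpa using hv)]
    exact addOrderOf_dvd_natCard _
  let _ : DistribMulAction G V := DistribMulAction.compHom V ρ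
  have smul_def (g : G) (x : V) : g • x = ρ g x := rfl
  let F : SubMulAction G V :=
    { carrier := A
      smul_mem' g x hx := by
        induction hx using AddSubgroup.closure_induction with
        | mem x hx =>
          obtain ⟨h, rfl⟩ := hx
          exact AddSubgroup.subset_closure ⟨g * h, by simp [smul_def]⟩
        | zero => simp
        | add x y _ _ hx hy => rw [smul_add]; exact add_mem hx hy
        | neg x _ hx => rw [smul_neg]; exact neg_mem hx }
  obtain ⟨b, hb, hb0⟩ := hG.exists_fixed_point_of_prime_dvd_card_of_fixed_point F hcard
    (a := ⟨0, A.zero_mem⟩) fun g => by ext; simp [smul_def]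
  exact (Submodule.ne_bot_iff _).2
    ⟨b, fun g => congrArg Subtype.val (hb g), fun h => hb0 (Subtype.ext h.symm)⟩

namespace MonoidAlgebra

theorem leftRegular_apply {K G : Type*} [Semiring K] [Group G] (g : G) (x : MonoidAlgebra K G) :
    Representation.leftRegular K G g x = of K G g * x := by
  ext h
  simp [Representation.coeff_ofMulAction, coeff_single_mul_apply]

section Invariants

variable {K G : Type*} [CommRing K] [Group G]

theorem coeff_eq_coeff_one_of_mem_invariants {b : MonoidAlgebra K G}
    (hb : b ∈ (Representation.leftRegular K G).invariants) (g : G) : b.coeff g = b.coeff 1 := by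
  simpa using (congrArg (coeff · g) (hb g)).symm

theorem coeff_one_mul_of_mem_invariants [Fintype G] {b : MonoidAlgebra K G}
    (hb : b ∈ (Representation.leftRegular K G).invariants) (u : MonoidAlgebra K G) :
    (b * u).coeff 1 = b.coeff 1 * ∑ g, u.coeff g := by
  rw [coeff_mul_apply_right, Finsupp.sum_fintype _ _ (by simp), Finset.mul_sum]
  simp [coeff_eq_coeff_one_of_mem_invariants hb]

theorem eq_zero_of_mem_invariants_of_mul_eq_zero [IsDomain K] [Fintype G] {b u : MonoidAlgebra K G}
    (hb : b ∈ (Representation.leftRegular K G).invariants) (hbu : b * u = 0)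
    (hu : ∑ g, u.coeff g ≠ 0) : b = 0 := by
  have hb1 : b.coeff 1 = 0 := by
    simpa [hbu, hu] using (coeff_one_mul_of_mem_invariants hb u).symm
  ext g
  rw [coeff_eq_coeff_one_of_mem_invariants hb, hb1]
  rfl

end Invariants

theorem isUnit_of_sum_coeff_ne_zero {p : ℕ} [Fact p.Prime] {K G : Type*} [Field K] [CharP K p]
    [Group G] [Fintype G] (hG : IsPGroup p G) {u : MonoidAlgebra K G}
    (hu : ∑ g, u.coeff g ≠ 0) : IsUnit u := by
  have hinj : Function.Injective (LinearMap.mulRight K u) := by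
    rw [← LinearMap.ker_eq_bot]
    by_contra hW
    set W := LinearMap.ker (LinearMap.mulRight K u)
    have hWG (g : G) : W ≤ W.comap (Representation.leftRegular K G g) :=
      fun x (hx : x * u = 0) => by simp [W, leftRegular_apply, mul_assoc, hx]
    have : Nontrivial W := Submodule.nontrivial_iff_ne_bot.2 hW
    obtain ⟨b, hb, hb0⟩ := Submodule.exists_mem_ne_zero_of_ne_bot
      (((Representation.leftRegular K G).subrepresentation W hWG).invariants_ne_bot_of_isPGroup hG)
    exact hb0 (Subtype.ext (eq_zero_of_mem_invariants_of_mul_eq_zero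
      (fun g => congrArg Subtype.val (hb g)) b.2 hu))
  obtain ⟨w, hw⟩ := (LinearMap.injective_iff_surjective.1 hinj) 1
  have := IsArtinianRing.of_finite K (MonoidAlgebra K G)
  exact IsUnit.of_mul_eq_one_right w hw

end MonoidAlgebra

@[simp]
theorem coeff_schur_s18 {K G : Type*} [Semiring K] (a b : MonoidAlgebra K G) (g : G) :
    (schur a b).coeff g = a.coeff g * b.coeff g :=
  rfl

theorem schur_mul_of {K G : Type*} [Semiring K] [Group G] (a b : MonoidAlgebra K G) (g : G) :
    schur (a * of K G g) (b * of K G g) = schur a b * of K G g := by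
  ext x
  simp [coeff_mul_single_apply]

section RightIdeal

variable {K G : Type*} [Field K] [Group G]

theorem IsRightIdeal.of_mul_of_mem {C : Submodule K (MonoidAlgebra K G)}
    (hC : ∀ c ∈ C, ∀ g : G, c * of K G g ∈ C) : IsRightIdeal C := by
  intro c hc v
  induction v using MonoidAlgebra.induction_linear with
  | zero => simp
  | add v w hv hw => rw [mul_add]; exact C.add_mem hv hw
  | single g r =>
    rw [← mul_one r, ← smul_single', mul_smul_comm]
    exact C.smul_mem r (hC c hc g)

theorem IsRightIdeal.span_schur {C : Submodule K (MonoidAlgebra K G)} (hC : IsRightIdeal C) :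
    IsRightIdeal (Submodule.span K {x | ∃ a ∈ C, ∃ b ∈ C, x = schur a b}) := by
  refine IsRightIdeal.of_mul_of_mem fun x hx g => ?_
  induction hx using Submodule.span_induction with
  | mem x hx =>
    obtain ⟨a, ha, b, hb, rfl⟩ := hx
    exact Submodule.subset_span ⟨_, hC a ha _, _, hC b hb _, (schur_mul_of a b g).symm⟩
  | zero => simp
  | add x y _ _ hx hy => rw [add_mul]; exact add_mem hx hy
  | smul r x _ hx => rw [smul_mul_assoc]; exact Submodule.smul_mem _ r hx

theorem IsRightIdeal.eq_top_of_isUnit_mem {C : Submodule K (MonoidAlgebra K G)}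
    (hC : IsRightIdeal C) {u : MonoidAlgebra K G} (hu : IsUnit u) (huC : u ∈ C) : C = ⊤ := by
  obtain ⟨w, hw⟩ := hu.exists_right_inv
  refine eq_top_iff.2 fun x _ => ?_
  simpa [← mul_assoc, hw] using hC u huC (w * x)

end RightIdeal

/-- For a `p`-group `G` in characteristic `p`: if the right ideal `C` is not
self-orthogonal, then `C * C = KG`. -/
theorem stmt18 {K G : Type*} [Field K] [Group G] [Fintype G]
    (p : ℕ) [Fact p.Prime] [CharP K p] (hG : IsPGroup p G)
    (C : Submodule K (MonoidAlgebra K G)) (hI : IsRightIdeal C)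
    (hno : ∃ c ∈ C, ∃ c' ∈ C, ∑ g : G, c.coeff g * c'.coeff g ≠ 0) :
    Submodule.span K
      {x : MonoidAlgebra K G | ∃ a ∈ C, ∃ b ∈ C, x = schur a b} = ⊤ := by
  obtain ⟨c, hc, c', hc', hcc'⟩ := hno
  have hunit : IsUnit (schur c c') :=
    MonoidAlgebra.isUnit_of_sum_coeff_ne_zero hG (by simpa using hcc')
  exact hI.span_schur.eq_top_of_isUnit_mem hunit (Submodule.subset_span ⟨c, hc, c', hc', rfl⟩)
end
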